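/- arXiv:1204.6451 — 5 statements merged into one kernel-verified Lean document; each statement's English description precedes it below -/
import Mathlib

section
/- Rotation strictly diminishes the growth rate: suppose λ > 0 and (φ₀,ψ₀) ∈ 𝒜 satisfy −λ² = E_rot(φ₀,ψ₀) = inf_{(φ,ψ)∈𝒜} E_rot(φ,ψ) < 0, where E_rot(φ,ψ) = ½∫_{−m}^{l}[p'(ρ₀)ρ₀(ψ' + |ξ|φ)² − 2g|ξ|ρ₀ψφ + 4ω²ρ₀φ²/λ²]dx₃, suppose ω ≠ 0 and φ₀ is not identically zero, and suppose λ₀ > 0 satisfies −λ₀² = inf_{(φ,ψ)∈𝒜} ½∫_{−m}^{l}[p'(ρ₀)ρ₀(ψ' + |ξ|φ)² − 2g|ξ|ρ₀ψφ]dx₃ < 0. Then −λ² ≥ −λ₀² + 2∫_{−m}^{l}ω²ρ₀φ₀²/λ² dx₃ > −λ₀², and consequently λ < λ₀. -/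
open MeasureTheory Real Set Filter

/-- A barotropic pressure law `p ∈ C^∞((0,∞))`, nonnegative, strictly increasing,
with derivative `dp` and `1/p'` locally bounded on `(0,∞)`. -/
structure PressureLaw where
  p : ℝ → ℝ
  dp : ℝ → ℝ
  smooth : ContDiffOn ℝ (⊤ : ℕ∞) p (Set.Ioi 0)
  nonneg : ∀ z ∈ Set.Ioi (0 : ℝ), 0 ≤ p z
  strictMono : StrictMonoOn p (Set.Ioi 0)
  hasDeriv : ∀ z ∈ Set.Ioi (0 : ℝ), HasDerivAt p (dp z) z
  dp_pos : ∀ z ∈ Set.Ioi (0 : ℝ), 0 < dp z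
  inv_dp_locBdd : ∀ K : Set ℝ, IsCompact K → K ⊆ Set.Ioi 0 → ∃ C, ∀ z ∈ K, 1 / dp z ≤ C

/-- The Rayleigh–Taylor steady state `ρ₀` on `(-m, l)`: positive, bounded above and
below by positive constants, smooth on `(-m,0)` and `(0,l)`, solving
`(p±(ρ₀))' = -g ρ₀` on the respective subinterval, with matching pressures and a
positive density jump `⟦ρ₀⟧ = ρ₀(0⁺) - ρ₀(0⁻) > 0` at the interface. -/
structure SteadyState (m l g : ℝ) (Pp Pm : PressureLaw) where
  ρ : ℝ → ℝ
  dρ : ℝ → ℝ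
  lb : ℝ
  ub : ℝ
  lb_pos : 0 < lb
  bounds : ∀ x ∈ Set.Ioo (-m) l, lb ≤ ρ x ∧ ρ x ≤ ub
  smooth_neg : ContDiffOn ℝ (⊤ : ℕ∞) ρ (Set.Ioo (-m) 0)
  smooth_pos : ContDiffOn ℝ (⊤ : ℕ∞) ρ (Set.Ioo 0 l)
  deriv_neg : ∀ x ∈ Set.Ioo (-m) 0, HasDerivAt ρ (dρ x) x
  deriv_pos : ∀ x ∈ Set.Ioo 0 l, HasDerivAt ρ (dρ x) x
  ode_neg : ∀ x ∈ Set.Ioo (-m) 0, Pm.dp (ρ x) * dρ x = -(g * ρ x)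
  ode_pos : ∀ x ∈ Set.Ioo 0 l, Pp.dp (ρ x) * dρ x = -(g * ρ x)
  ρplus : ℝ
  ρminus : ℝ
  lim_plus : Filter.Tendsto ρ (nhdsWithin 0 (Set.Ioi 0)) (nhds ρplus)
  lim_minus : Filter.Tendsto ρ (nhdsWithin 0 (Set.Iio 0)) (nhds ρminus)
  pressure_eq : Pp.p ρplus = Pm.p ρminus
  jump_pos : 0 < ρplus - ρminus

/-- `x ↦ p'(ρ₀(x))`, using `p₋` below the interface and `p₊` above it. -/
noncomputable def SteadyState.pd {m l g : ℝ} {Pp Pm : PressureLaw}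
    (S : SteadyState m l g Pp Pm) (x : ℝ) : ℝ :=
  if x < 0 then Pm.dp (S.ρ x) else Pp.dp (S.ρ x)

/-- The density jump `⟦ρ₀⟧` at the interface. -/
noncomputable def SteadyState.jump {m l g : ℝ} {Pp Pm : PressureLaw}
    (S : SteadyState m l g Pp Pm) : ℝ := S.ρplus - S.ρminus

/-- The energy `E(φ, ψ; s)` with spatial frequency `ξa = |ξ|`, rotation speed `ω`,
parameter `s`, where `dψ` denotes the derivative `ψ'`. -/
noncomputable def Een {m l g : ℝ} {Pp Pm : PressureLaw} (S : SteadyState m l g Pp Pm)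
    (ω ξa s : ℝ) (φ ψ dψ : ℝ → ℝ) : ℝ :=
  (1 / 2) * ∫ x in Set.Ioo (-m) l,
    (S.pd x * S.ρ x * (dψ x + ξa * φ x) ^ 2 - 2 * g * ξa * S.ρ x * ψ x * φ x
      + 4 * ω ^ 2 * s * S.ρ x * (φ x) ^ 2)

/-- `J(φ, ψ) = ½∫ ρ₀ (φ² + ψ²)`. -/
noncomputable def Jen {m l g : ℝ} {Pp Pm : PressureLaw} (S : SteadyState m l g Pp Pm)
    (φ ψ : ℝ → ℝ) : ℝ :=
  (1 / 2) * ∫ x in Set.Ioo (-m) l, S.ρ x * ((φ x) ^ 2 + (ψ x) ^ 2)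

/-- Membership `(φ, ψ) ∈ L²(-m,l) × H₀¹(-m,l)`, where `dψ` is the derivative of `ψ`. -/
structure MemAdm (m l : ℝ) (φ ψ dψ : ℝ → ℝ) : Prop where
  φ_mem : MemLp φ 2 (volume.restrict (Set.Ioo (-m) l))
  ψ_cont : ContinuousOn ψ (Set.Icc (-m) l)
  ψ_deriv : ∀ x ∈ Set.Ioo (-m) l, HasDerivAt ψ (dψ x) x
  ψ_mem : MemLp ψ 2 (volume.restrict (Set.Ioo (-m) l))
  dψ_mem : MemLp dψ 2 (volume.restrict (Set.Ioo (-m) l))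
  bc_left : ψ (-m) = 0
  bc_right : ψ l = 0

/-- `μ(s) = μ(s; |ξ|) = inf_{(φ,ψ) ∈ 𝒜} E(φ, ψ; s)`. -/
noncomputable def muInf {m l g : ℝ} {Pp Pm : PressureLaw} (S : SteadyState m l g Pp Pm)
    (ω ξa s : ℝ) : ℝ :=
  sInf {e : ℝ | ∃ φ ψ dψ : ℝ → ℝ, MemAdm m l φ ψ dψ ∧ Jen S φ ψ = 1 ∧
    e = Een S ω ξa s φ ψ dψ}

/-- `|ξ|` for `ξ ∈ ℝ²`. -/
noncomputable def mag (ξ : ℝ × ℝ) : ℝ := Real.sqrt (ξ.1 ^ 2 + ξ.2 ^ 2)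

private lemma PressureLaw.dp_contOn (P : PressureLaw) : ContinuousOn P.dp (Set.Ioi 0) := by
  have h := P.smooth.continuousOn_deriv_of_isOpen isOpen_Ioi (by simp)
  exact h.congr fun z hz => ((P.hasDeriv z hz).deriv).symm

/-- **Rotation strictly diminishes the growth rate** (Remark 1.1). -/
theorem rotation_diminishes_growth
    {m l g : ℝ} (hm : 0 < m) (hl : 0 < l) (hg : 0 < g) (ω : ℝ)
    {Pp Pm : PressureLaw} (S : SteadyState m l g Pp Pm)
    (ξ : ℝ × ℝ) (hξ : ξ ≠ 0)
    (lam lam0 : ℝ) (hlam : 0 < lam) (hlam0 : 0 < lam0)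
    (φ₀ ψ₀ dψ₀ : ℝ → ℝ)
    (hmem : MemAdm m l φ₀ ψ₀ dψ₀) (hJ : Jen S φ₀ ψ₀ = 1)
    (hmin : -(lam ^ 2) = Een S ω (mag ξ) (1 / lam ^ 2) φ₀ ψ₀ dψ₀)
    (hinf : IsGLB {e : ℝ | ∃ φ ψ dψ : ℝ → ℝ, MemAdm m l φ ψ dψ ∧ Jen S φ ψ = 1 ∧
        e = Een S ω (mag ξ) (1 / lam ^ 2) φ ψ dψ} (-(lam ^ 2)))
    (hneg : -(lam ^ 2) < 0)
    (hω : ω ≠ 0)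
    (hφ₀ : ¬ (∀ᵐ x ∂(volume.restrict (Set.Ioo (-m) l)), φ₀ x = 0))
    (hinf0 : IsGLB {e : ℝ | ∃ φ ψ dψ : ℝ → ℝ, MemAdm m l φ ψ dψ ∧ Jen S φ ψ = 1 ∧
        e = Een S ω (mag ξ) 0 φ ψ dψ} (-(lam0 ^ 2)))
    (hneg0 : -(lam0 ^ 2) < 0) :
    -(lam ^ 2) ≥ -(lam0 ^ 2)
        + 2 * ∫ x in Set.Ioo (-m) l, ω ^ 2 * S.ρ x * (φ₀ x) ^ 2 / lam ^ 2
      ∧ -(lam0 ^ 2)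
        < -(lam0 ^ 2) + 2 * ∫ x in Set.Ioo (-m) l, ω ^ 2 * S.ρ x * (φ₀ x) ^ 2 / lam ^ 2
      ∧ lam < lam0 := by
  classical
  have hml : (-m) < l := by linarith
  have hmE : MeasurableSet (Set.Ioo (-m) l) := measurableSet_Ioo
  set μE := volume.restrict (Set.Ioo (-m) l) with hμE
  -- a.e. equality of the interval with the union of the two halves
  have hEU : (Set.Ioo (-m) l : Set ℝ) =ᵐ[volume] ((Set.Ioo (-m) 0 ∪ Set.Ioo 0 l : Set ℝ)) := by
    have h0 : (volume : Measure ℝ) {(0:ℝ)} = 0 := measure_singleton 0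
    rw [Filter.eventuallyEq_set]
    filter_upwards [compl_mem_ae_iff.mpr h0] with x hx
    simp only [Set.mem_compl_iff, Set.mem_singleton_iff] at hx
    simp only [Set.mem_Ioo, Set.mem_union]
    constructor
    · rintro ⟨h1, h2⟩
      rcases lt_or_gt_of_ne hx with h | h
      · exact Or.inl ⟨h1, h⟩
      · exact Or.inr ⟨h, h2⟩
    · rintro (⟨h1, h2⟩ | ⟨h1, h2⟩) <;> exact ⟨by linarith, by linarith⟩
  have hres : μE = volume.restrict (Set.Ioo (-m) 0 ∪ Set.Ioo 0 l) :=
    Measure.restrict_congr_set hEU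
  have hρpos : ∀ x ∈ Set.Ioo (-m) l, 0 < S.ρ x :=
    fun x hx => lt_of_lt_of_le S.lb_pos (S.bounds x hx).1
  have hsub1 : Set.Ioo (-m) 0 ⊆ Set.Ioo (-m) l := by
    intro x hx; simp only [Set.mem_Ioo] at hx ⊢; exact ⟨hx.1, by linarith [hx.2]⟩
  have hsub2 : Set.Ioo (0:ℝ) l ⊆ Set.Ioo (-m) l := by
    intro x hx; simp only [Set.mem_Ioo] at hx ⊢; exact ⟨by linarith [hx.1], hx.2⟩
  have hρc1 : ContinuousOn S.ρ (Set.Ioo (-m) 0) := S.smooth_neg.continuousOn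
  have hρc2 : ContinuousOn S.ρ (Set.Ioo 0 l) := S.smooth_pos.continuousOn
  -- measurability of ρ
  have hρm : AEStronglyMeasurable S.ρ μE := by
    rw [hres, aestronglyMeasurable_union_iff]
    exact ⟨hρc1.aestronglyMeasurable measurableSet_Ioo,
      hρc2.aestronglyMeasurable measurableSet_Ioo⟩
  -- measurability of pd * ρ
  have hpdρm : AEStronglyMeasurable (fun x => S.pd x * S.ρ x) μE := by
    rw [hres, aestronglyMeasurable_union_iff]
    constructor
    · have hc : ContinuousOn (fun x => Pm.dp (S.ρ x) * S.ρ x) (Set.Ioo (-m) 0) :=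
        ((Pm.dp_contOn).comp hρc1 fun x hx => hρpos x (hsub1 hx)).mul hρc1
      have hc' : ContinuousOn (fun x => S.pd x * S.ρ x) (Set.Ioo (-m) 0) :=
        hc.congr fun x hx => by
          simp only [SteadyState.pd, if_pos (Set.mem_Ioo.mp hx).2]
      exact hc'.aestronglyMeasurable measurableSet_Ioo
    · have hc : ContinuousOn (fun x => Pp.dp (S.ρ x) * S.ρ x) (Set.Ioo 0 l) :=
        ((Pp.dp_contOn).comp hρc2 fun x hx => hρpos x (hsub2 hx)).mul hρc2
      have hc' : ContinuousOn (fun x => S.pd x * S.ρ x) (Set.Ioo 0 l) :=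
        hc.congr fun x hx => by
          simp only [SteadyState.pd, if_neg (not_lt.mpr (Set.mem_Ioo.mp hx).1.le)]
      exact hc'.aestronglyMeasurable measurableSet_Ioo
  -- bounds
  have hIccsub : Set.Icc S.lb S.ub ⊆ Set.Ioi 0 :=
    fun z hz => lt_of_lt_of_le S.lb_pos hz.1
  obtain ⟨C₁, hC₁⟩ := isCompact_Icc.exists_bound_of_continuousOn (Pm.dp_contOn.mono hIccsub)
  obtain ⟨C₂, hC₂⟩ := isCompact_Icc.exists_bound_of_continuousOn (Pp.dp_contOn.mono hIccsub)
  have hbdρ : ∀ᵐ x ∂μE, ‖S.ρ x‖ ≤ S.ub := by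
    rw [hμE, ae_restrict_iff' hmE]
    refine ae_of_all _ fun x hx => ?_
    rw [Real.norm_eq_abs, abs_of_pos (hρpos x hx)]
    exact (S.bounds x hx).2
  have hbd : ∀ᵐ x ∂μE, ‖S.pd x * S.ρ x‖ ≤ max C₁ C₂ * S.ub := by
    rw [hμE, ae_restrict_iff' hmE]
    refine ae_of_all _ fun x hx => ?_
    obtain ⟨hlbx, hubx⟩ := S.bounds x hx
    have hmemIcc : S.ρ x ∈ Set.Icc S.lb S.ub := ⟨hlbx, hubx⟩
    have h1 : ‖S.pd x‖ ≤ max C₁ C₂ := by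
      by_cases hx0 : x < 0
      · simp only [SteadyState.pd, if_pos hx0]
        exact le_trans (hC₁ _ hmemIcc) (le_max_left _ _)
      · simp only [SteadyState.pd, if_neg hx0]
        exact le_trans (hC₂ _ hmemIcc) (le_max_right _ _)
    have h2 : ‖S.ρ x‖ ≤ S.ub := by
      rw [Real.norm_eq_abs, abs_of_pos (hρpos x hx)]; exact hubx
    rw [norm_mul]
    exact mul_le_mul h1 h2 (norm_nonneg _) (le_trans (norm_nonneg _) h1)
  -- integrability of the three pieces
  set ξa := mag ξ with hξadef
  have hf1 : Integrable (fun x => S.pd x * S.ρ x * (dψ₀ x + ξa * φ₀ x) ^ 2) μE := by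
    have hsum : MemLp (fun x => dψ₀ x + ξa * φ₀ x) 2 μE :=
      hmem.dψ_mem.add (hmem.φ_mem.const_mul ξa)
    exact hsum.integrable_sq.bdd_mul hpdρm hbd
  have hψφ : Integrable (fun x => ψ₀ x * φ₀ x) μE := by
    refine Integrable.mono' (hmem.ψ_mem.integrable_sq.add hmem.φ_mem.integrable_sq)
      (hmem.ψ_mem.aestronglyMeasurable.mul hmem.φ_mem.aestronglyMeasurable)
      (ae_of_all _ fun x => ?_)
    simp only [Pi.add_apply]
    rw [Real.norm_eq_abs, abs_mul]
    nlinarith [abs_nonneg (ψ₀ x), abs_nonneg (φ₀ x), sq_abs (ψ₀ x), sq_abs (φ₀ x),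
      sq_nonneg (|ψ₀ x| - |φ₀ x|)]
  have hf2 : Integrable (fun x => 2 * g * ξa * S.ρ x * ψ₀ x * φ₀ x) μE := by
    have h := (hψφ.bdd_mul hρm hbdρ).const_mul (2 * g * ξa)
    exact h.congr (ae_of_all _ fun x => by ring)
  have hf3 : Integrable (fun x => S.ρ x * φ₀ x ^ 2) μE :=
    hmem.φ_mem.integrable_sq.bdd_mul hρm hbdρ
  -- splitting the energy
  have hsplit : ∀ s : ℝ, Een S ω ξa s φ₀ ψ₀ dψ₀ =
      (1/2) * ((∫ x in Set.Ioo (-m) l, S.pd x * S.ρ x * (dψ₀ x + ξa * φ₀ x) ^ 2)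
        - ∫ x in Set.Ioo (-m) l, 2 * g * ξa * S.ρ x * ψ₀ x * φ₀ x)
      + (1/2) * (4 * ω ^ 2 * s) * ∫ x in Set.Ioo (-m) l, S.ρ x * φ₀ x ^ 2 := by
    intro s
    unfold Een
    rw [show (∫ x in Set.Ioo (-m) l,
        (S.pd x * S.ρ x * (dψ₀ x + ξa * φ₀ x) ^ 2 - 2 * g * ξa * S.ρ x * ψ₀ x * φ₀ x
          + 4 * ω ^ 2 * s * S.ρ x * (φ₀ x) ^ 2))
        = ∫ x in Set.Ioo (-m) l,
        ((S.pd x * S.ρ x * (dψ₀ x + ξa * φ₀ x) ^ 2 - 2 * g * ξa * S.ρ x * ψ₀ x * φ₀ x)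
          + (4 * ω ^ 2 * s) * (S.ρ x * φ₀ x ^ 2)) from
      integral_congr_ae (ae_of_all _ fun x => by ring)]
    have key1 : (∫ x in Set.Ioo (-m) l,
        ((S.pd x * S.ρ x * (dψ₀ x + ξa * φ₀ x) ^ 2 - 2 * g * ξa * S.ρ x * ψ₀ x * φ₀ x)
          + 4 * ω ^ 2 * s * (S.ρ x * φ₀ x ^ 2)))
        = (∫ x in Set.Ioo (-m) l,
            (S.pd x * S.ρ x * (dψ₀ x + ξa * φ₀ x) ^ 2 - 2 * g * ξa * S.ρ x * ψ₀ x * φ₀ x))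
          + ∫ x in Set.Ioo (-m) l, 4 * ω ^ 2 * s * (S.ρ x * φ₀ x ^ 2) :=
      integral_add (hf1.sub hf2) (hf3.const_mul (4 * ω ^ 2 * s))
    have key2 : (∫ x in Set.Ioo (-m) l,
        (S.pd x * S.ρ x * (dψ₀ x + ξa * φ₀ x) ^ 2 - 2 * g * ξa * S.ρ x * ψ₀ x * φ₀ x))
        = (∫ x in Set.Ioo (-m) l, S.pd x * S.ρ x * (dψ₀ x + ξa * φ₀ x) ^ 2)
          - ∫ x in Set.Ioo (-m) l, 2 * g * ξa * S.ρ x * ψ₀ x * φ₀ x :=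
      integral_sub hf1 hf2
    have key3 : (∫ x in Set.Ioo (-m) l, 4 * ω ^ 2 * s * (S.ρ x * φ₀ x ^ 2))
        = (4 * ω ^ 2 * s) * ∫ x in Set.Ioo (-m) l, S.ρ x * φ₀ x ^ 2 :=
      integral_const_mul (4 * ω ^ 2 * s) _
    rw [key1, key2, key3]
    ring
  -- the rotation integral
  set I := ∫ x in Set.Ioo (-m) l, ω ^ 2 * S.ρ x * (φ₀ x) ^ 2 / lam ^ 2 with hIdef
  have hI : I = (ω ^ 2 / lam ^ 2) * ∫ x in Set.Ioo (-m) l, S.ρ x * φ₀ x ^ 2 := by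
    have key : (∫ x in Set.Ioo (-m) l, (ω ^ 2 / lam ^ 2) * (S.ρ x * φ₀ x ^ 2))
        = (ω ^ 2 / lam ^ 2) * ∫ x in Set.Ioo (-m) l, S.ρ x * φ₀ x ^ 2 :=
      integral_const_mul _ _
    rw [hIdef, ← key]
    exact integral_congr_ae (ae_of_all _ fun x => by ring)
  have hEs : Een S ω ξa (1 / lam ^ 2) φ₀ ψ₀ dψ₀ = Een S ω ξa 0 φ₀ ψ₀ dψ₀ + 2 * I := by
    rw [hsplit (1 / lam ^ 2), hsplit 0, hI]
    have hlam2 : lam ^ 2 ≠ 0 := by positivity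
    field_simp
    ring
  -- I is integrable, nonnegative, and positive
  have hIint : Integrable (fun x => ω ^ 2 * S.ρ x * (φ₀ x) ^ 2 / lam ^ 2) μE :=
    (hf3.const_mul (ω ^ 2 / lam ^ 2)).congr (ae_of_all _ fun x => by ring)
  have hnn : ∀ᵐ x ∂μE, 0 ≤ ω ^ 2 * S.ρ x * (φ₀ x) ^ 2 / lam ^ 2 := by
    rw [hμE, ae_restrict_iff' hmE]
    refine ae_of_all _ fun x hx => ?_
    have h := (hρpos x hx).le
    positivity
  have hInonneg : 0 ≤ I := integral_nonneg_of_ae hnn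
  have hIpos : 0 < I := by
    rcases hInonneg.lt_or_eq with h | h
    · exact h
    · exfalso
      have hz : (fun x => ω ^ 2 * S.ρ x * (φ₀ x) ^ 2 / lam ^ 2) =ᵐ[μE] 0 :=
        (integral_eq_zero_iff_of_nonneg_ae hnn hIint).mp h.symm
      apply hφ₀
      have hρae : ∀ᵐ x ∂μE, 0 < S.ρ x := by
        rw [hμE, ae_restrict_iff' hmE]; exact ae_of_all _ hρpos
      filter_upwards [hz, hρae] with x hx hρx
      simp only [Pi.zero_apply] at hx
      by_contra hφx
      have hω2 : 0 < ω ^ 2 := by positivity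
      have hφ2 : 0 < (φ₀ x) ^ 2 := by positivity
      have : 0 < ω ^ 2 * S.ρ x * (φ₀ x) ^ 2 / lam ^ 2 := by positivity
      linarith
  -- the zero-rotation energy of (φ₀, ψ₀) is above the infimum  -(lam0²)
  have hlow : -(lam0 ^ 2) ≤ Een S ω ξa 0 φ₀ ψ₀ dψ₀ :=
    hinf0.1 ⟨φ₀, ψ₀, dψ₀, hmem, hJ, rfl⟩
  have h1 : -(lam ^ 2) ≥ -(lam0 ^ 2) + 2 * I := by
    rw [hmin, hEs]; linarith
  have h2 : -(lam0 ^ 2) < -(lam0 ^ 2) + 2 * I := by linarith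
  refine ⟨h1, h2, ?_⟩
  have hsq : lam ^ 2 < lam0 ^ 2 := by linarith
  exact lt_of_pow_lt_pow_left₀ 2 hlam0.le hsq
end

section
/- For every (φ,ψ) ∈ 𝒜 and every s > 0, the energy admits the rewriting E(φ,ψ;s) = −g|ξ| + ½∫_{−m}^{l}[p'(ρ₀)ρ₀(ψ' + |ξ|φ)² + g|ξ|ρ₀(φ − ψ)²]dx₃ + 2ω²s∫_{−m}^{l}ρ₀φ² dx₃, and hence E(φ,ψ;s) ≥ −g|ξ|; consequently μ(s) ≥ −g|ξ| and, when μ(s) < 0, the growth rate λ(|ξ|,s) = √(−μ(s)) satisfies λ(|ξ|,s) ≤ √(g|ξ|). -/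
open MeasureTheory Real Set Filter

/-- **The rewriting (2.3.04) of the energy, the lower bound `E ≥ -g|ξ|`, the lower
bound `μ(s) ≥ -g|ξ|` and the bound `λ(|ξ|,s) ≤ √(g|ξ|)` when `μ(s) < 0`.** -/
theorem energy_rewriting_and_lower_bound
    {m l g : ℝ} (hm : 0 < m) (hl : 0 < l) (hg : 0 < g) (ω : ℝ)
    {Pp Pm : PressureLaw} (S : SteadyState m l g Pp Pm)
    (ξ : ℝ × ℝ) (hξ : ξ ≠ 0) (s : ℝ) (hs : 0 < s) :
    (∀ φ ψ dψ : ℝ → ℝ, MemAdm m l φ ψ dψ → Jen S φ ψ = 1 →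
      Een S ω (mag ξ) s φ ψ dψ
          = -(g * mag ξ)
            + (1 / 2) * (∫ x in Set.Ioo (-m) l,
                (S.pd x * S.ρ x * (dψ x + mag ξ * φ x) ^ 2
                  + g * mag ξ * S.ρ x * (φ x - ψ x) ^ 2))
            + 2 * ω ^ 2 * s * ∫ x in Set.Ioo (-m) l, S.ρ x * (φ x) ^ 2
        ∧ -(g * mag ξ) ≤ Een S ω (mag ξ) s φ ψ dψ)
    ∧ -(g * mag ξ) ≤ muInf S ω (mag ξ) s
    ∧ (muInf S ω (mag ξ) s < 0 →
        Real.sqrt (-(muInf S ω (mag ξ) s)) ≤ Real.sqrt (g * mag ξ)) := by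
  set a : ℝ := mag ξ with ha_def
  have ha0 : 0 ≤ a := Real.sqrt_nonneg _
  have hml : (-m : ℝ) < 0 := neg_lt_zero.mpr hm
  set μm := volume.restrict (Set.Ioo (-m : ℝ) l) with hμm_def
  set U : Set ℝ := Set.Ioo (-m) 0 ∪ Set.Ioo 0 l with hU_def
  have hUopen : IsOpen U := isOpen_Ioo.union isOpen_Ioo
  have hUsub : U ⊆ Set.Ioo (-m) l :=
    Set.union_subset (Set.Ioo_subset_Ioo le_rfl hl.le) (Set.Ioo_subset_Ioo hml.le le_rfl)
  have hUae : (Set.Ioo (-m : ℝ) l : Set ℝ) =ᵐ[volume] U := by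
    rw [MeasureTheory.ae_eq_set]
    constructor
    · refine measure_mono_null (fun x hx => ?_) (Real.volume_singleton (a := 0))
      rcases hx with ⟨hx1, hx2⟩
      simp only [Set.mem_singleton_iff]
      by_contra h0
      rcases lt_or_gt_of_ne h0 with h | h
      · exact hx2 (Or.inl ⟨hx1.1, h⟩)
      · exact hx2 (Or.inr ⟨h, hx1.2⟩)
    · rw [Set.diff_eq_empty.mpr hUsub]; simp
  have hrestrict : μm = volume.restrict U := Measure.restrict_congr_set hUae
  -- positivity of ρ on the interval
  have hρpos : ∀ x ∈ Set.Ioo (-m : ℝ) l, 0 < S.ρ x :=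
    fun x hx => lt_of_lt_of_le S.lb_pos (S.bounds x hx).1
  -- continuity of ρ on U
  have hρcont : ContinuousOn S.ρ U := by
    intro x hx
    rcases hx with h | h
    · exact ((S.smooth_neg.continuousOn.continuousAt
        (isOpen_Ioo.mem_nhds h))).continuousWithinAt
    · exact ((S.smooth_pos.continuousOn.continuousAt
        (isOpen_Ioo.mem_nhds h))).continuousWithinAt
  -- continuity of dp on Ioi 0
  have hdp : ∀ P : PressureLaw, ContinuousOn P.dp (Set.Ioi 0) := by
    intro P
    have h1 : ContinuousOn (deriv P.p) (Set.Ioi 0) :=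
      P.smooth.continuousOn_deriv_of_isOpen isOpen_Ioi (by simp)
    exact h1.congr fun z hz => ((P.hasDeriv z hz).deriv).symm
  -- continuity of pd on U
  have hpdcont : ContinuousOn S.pd U := by
    intro x hx
    rcases hx with h | h
    · have hc : ContinuousOn (fun y => Pm.dp (S.ρ y)) (Set.Ioo (-m) 0) :=
        (hdp Pm).comp (hρcont.mono Set.subset_union_left)
          (fun y hy => hρpos y (hUsub (Or.inl hy)))
      have hca : ContinuousAt (fun y => Pm.dp (S.ρ y)) x :=
        hc.continuousAt (isOpen_Ioo.mem_nhds h)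
      refine (hca.congr ?_).continuousWithinAt
      filter_upwards [isOpen_Ioo.mem_nhds h] with y hy
      simp [SteadyState.pd, if_pos hy.2]
    · have hc : ContinuousOn (fun y => Pp.dp (S.ρ y)) (Set.Ioo 0 l) :=
        (hdp Pp).comp (hρcont.mono Set.subset_union_right)
          (fun y hy => hρpos y (hUsub (Or.inr hy)))
      have hca : ContinuousAt (fun y => Pp.dp (S.ρ y)) x :=
        hc.continuousAt (isOpen_Ioo.mem_nhds h)
      refine (hca.congr ?_).continuousWithinAt
      filter_upwards [isOpen_Ioo.mem_nhds h] with y hy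
      simp [SteadyState.pd, if_neg (not_lt.mpr hy.1.le)]
  have hρm : AEStronglyMeasurable S.ρ μm := by
    rw [hrestrict]; exact hρcont.aestronglyMeasurable hUopen.measurableSet
  have hpdm : AEStronglyMeasurable S.pd μm := by
    rw [hrestrict]; exact hpdcont.aestronglyMeasurable hUopen.measurableSet
  have haeU : ∀ᵐ x ∂μm, x ∈ U := by
    rw [hrestrict]; exact ae_restrict_mem hUopen.measurableSet
  -- bounds
  have hlmem : l / 2 ∈ Set.Ioo (-m : ℝ) l := ⟨by linarith, by linarith⟩
  have hub_pos : 0 < S.ub :=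
    lt_of_lt_of_le (hρpos _ hlmem) (S.bounds _ hlmem).2
  have hKsub : Set.Icc S.lb S.ub ⊆ Set.Ioi (0 : ℝ) :=
    fun z hz => lt_of_lt_of_le S.lb_pos hz.1
  obtain ⟨C₁, hC₁⟩ := isCompact_Icc.exists_bound_of_continuousOn ((hdp Pm).mono hKsub)
  obtain ⟨C₂, hC₂⟩ := isCompact_Icc.exists_bound_of_continuousOn ((hdp Pp).mono hKsub)
  have hρbd : ∀ᵐ x ∂μm, ‖S.ρ x‖ ≤ S.ub := by
    filter_upwards [haeU] with x hx
    rw [Real.norm_eq_abs, abs_of_pos (hρpos x (hUsub hx))]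
    exact (S.bounds x (hUsub hx)).2
  have hpdρbd : ∀ᵐ x ∂μm, ‖S.pd x * S.ρ x‖ ≤ max C₁ C₂ * S.ub := by
    filter_upwards [haeU] with x hx
    have hxI := hUsub hx
    have hmem : S.ρ x ∈ Set.Icc S.lb S.ub := ⟨(S.bounds x hxI).1, (S.bounds x hxI).2⟩
    have hpdb : ‖S.pd x‖ ≤ max C₁ C₂ := by
      unfold SteadyState.pd
      split
      · exact (hC₁ _ hmem).trans (le_max_left _ _)
      · exact (hC₂ _ hmem).trans (le_max_right _ _)
    have hρb : ‖S.ρ x‖ ≤ S.ub := by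
      rw [Real.norm_eq_abs, abs_of_pos (hρpos x hxI)]; exact hmem.2
    calc ‖S.pd x * S.ρ x‖ = ‖S.pd x‖ * ‖S.ρ x‖ := norm_mul _ _
      _ ≤ max C₁ C₂ * S.ub :=
        mul_le_mul hpdb hρb (norm_nonneg _) ((norm_nonneg _).trans hpdb)
  -- product of two L² functions is integrable
  have hmul : ∀ f h : ℝ → ℝ, MemLp f 2 μm → MemLp h 2 μm →
      Integrable (fun x => f x * h x) μm := by
    intro f h hf hh
    have h1 : Integrable (fun x => (f x + h x) ^ 2) μm := (hf.add hh).integrable_sq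
    have h2 : Integrable (fun x => f x ^ 2) μm := hf.integrable_sq
    have h3 : Integrable (fun x => h x ^ 2) μm := hh.integrable_sq
    have heq : (fun x => f x * h x)
        = fun x => (1 / 2) * ((f x + h x) ^ 2 - f x ^ 2 - h x ^ 2) := by
      funext x; ring
    rw [heq]
    exact (((h1.sub h2).sub h3).const_mul _)
  -- the main pointwise statement
  have main : ∀ φ ψ dψ : ℝ → ℝ, MemAdm m l φ ψ dψ → Jen S φ ψ = 1 →
      Een S ω a s φ ψ dψ
          = -(g * a)
            + (1 / 2) * (∫ x in Set.Ioo (-m) l,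
                (S.pd x * S.ρ x * (dψ x + a * φ x) ^ 2
                  + g * a * S.ρ x * (φ x - ψ x) ^ 2))
            + 2 * ω ^ 2 * s * ∫ x in Set.Ioo (-m) l, S.ρ x * (φ x) ^ 2
        ∧ -(g * a) ≤ Een S ω a s φ ψ dψ := by
    intro φ ψ dψ adm hJ
    have hφ := adm.φ_mem
    have hψ := adm.ψ_mem
    have hdψ := adm.dψ_mem
    have hsum : MemLp (fun x => dψ x + a * φ x) 2 μm := hdψ.add (hφ.const_mul a)
    have hsub : MemLp (fun x => φ x - ψ x) 2 μm := hφ.sub hψ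
    -- integrability of pieces
    have hA : Integrable (fun x => S.pd x * S.ρ x * (dψ x + a * φ x) ^ 2) μm :=
      Integrable.bdd_mul hsum.integrable_sq (hpdm.mul hρm) hpdρbd
    have hB : Integrable (fun x => S.ρ x * (φ x - ψ x) ^ 2) μm :=
      Integrable.bdd_mul hsub.integrable_sq hρm hρbd
    have hC : Integrable (fun x => S.ρ x * φ x ^ 2) μm :=
      Integrable.bdd_mul hφ.integrable_sq hρm hρbd
    have hD : Integrable (fun x => S.ρ x * ψ x ^ 2) μm :=
      Integrable.bdd_mul hψ.integrable_sq hρm hρbd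
    have hF1 : Integrable (fun x => S.pd x * S.ρ x * (dψ x + a * φ x) ^ 2
        + g * a * S.ρ x * (φ x - ψ x) ^ 2) μm := by
      refine hA.add ?_
      have : (fun x => g * a * S.ρ x * (φ x - ψ x) ^ 2)
          = fun x => (g * a) * (S.ρ x * (φ x - ψ x) ^ 2) := by funext x; ring
      rw [this]; exact hB.const_mul _
    have hF3 : Integrable (fun x => S.ρ x * (φ x ^ 2 + ψ x ^ 2)) μm := by
      have : (fun x => S.ρ x * (φ x ^ 2 + ψ x ^ 2))
          = fun x => S.ρ x * φ x ^ 2 + S.ρ x * ψ x ^ 2 := by funext x; ring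
      rw [this]; exact hC.add hD
    -- the key integral identity
    have hJ2 : (∫ x in Set.Ioo (-m) l, S.ρ x * (φ x ^ 2 + ψ x ^ 2)) = 2 := by
      have := hJ
      unfold Jen at this
      linarith
    have hEen : Een S ω a s φ ψ dψ
        = -(g * a)
          + (1 / 2) * (∫ x in Set.Ioo (-m) l,
              (S.pd x * S.ρ x * (dψ x + a * φ x) ^ 2
                + g * a * S.ρ x * (φ x - ψ x) ^ 2))
          + 2 * ω ^ 2 * s * ∫ x in Set.Ioo (-m) l, S.ρ x * φ x ^ 2 := by
      unfold Een
      have hptw : (fun x => S.pd x * S.ρ x * (dψ x + a * φ x) ^ 2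
            - 2 * g * a * S.ρ x * ψ x * φ x + 4 * ω ^ 2 * s * S.ρ x * φ x ^ 2)
          = fun x => ((S.pd x * S.ρ x * (dψ x + a * φ x) ^ 2
              + g * a * S.ρ x * (φ x - ψ x) ^ 2)
            + (4 * ω ^ 2 * s) * (S.ρ x * φ x ^ 2))
            + (-(g * a)) * (S.ρ x * (φ x ^ 2 + ψ x ^ 2)) := by
        funext x; ring
      rw [hptw]
      have hG1 : Integrable (fun x => (S.pd x * S.ρ x * (dψ x + a * φ x) ^ 2
          + g * a * S.ρ x * (φ x - ψ x) ^ 2)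
          + (4 * ω ^ 2 * s) * (S.ρ x * φ x ^ 2)) μm :=
        hF1.add (hC.const_mul _)
      have hG2 : Integrable (fun x => (-(g * a)) * (S.ρ x * (φ x ^ 2 + ψ x ^ 2))) μm :=
        hF3.const_mul _
      have hG3 : Integrable (fun x => (4 * ω ^ 2 * s) * (S.ρ x * φ x ^ 2)) μm :=
        hC.const_mul _
      rw [MeasureTheory.integral_add hG1 hG2]
      rw [MeasureTheory.integral_add hF1 hG3]
      rw [MeasureTheory.integral_const_mul, MeasureTheory.integral_const_mul]
      rw [hJ2]
      ring
    refine ⟨hEen, ?_⟩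
    have hpdnn : ∀ x ∈ Set.Ioo (-m : ℝ) l, 0 ≤ S.pd x := by
      intro x hx
      unfold SteadyState.pd
      split
      · exact (Pm.dp_pos _ (hρpos x hx)).le
      · exact (Pp.dp_pos _ (hρpos x hx)).le
    have hI1nn : 0 ≤ ∫ x in Set.Ioo (-m) l,
        (S.pd x * S.ρ x * (dψ x + a * φ x) ^ 2 + g * a * S.ρ x * (φ x - ψ x) ^ 2) := by
      refine setIntegral_nonneg measurableSet_Ioo fun x hx => ?_
      have h1 := hpdnn x hx
      have h2 := (hρpos x hx).le
      have h3 := hg.le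
      positivity
    have hI2nn : 0 ≤ ∫ x in Set.Ioo (-m) l, S.ρ x * φ x ^ 2 := by
      refine setIntegral_nonneg measurableSet_Ioo fun x hx => ?_
      have h2 := (hρpos x hx).le
      positivity
    have hωs : 0 ≤ 2 * ω ^ 2 * s := by positivity
    rw [hEen]
    nlinarith [mul_nonneg hωs hI2nn]
  refine ⟨fun φ ψ dψ adm hJ => main φ ψ dψ adm hJ, ?_, ?_⟩
  · -- bound on the infimum
    unfold muInf
    by_cases hne : {e : ℝ | ∃ φ ψ dψ : ℝ → ℝ, MemAdm m l φ ψ dψ ∧ Jen S φ ψ = 1 ∧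
        e = Een S ω a s φ ψ dψ}.Nonempty
    · refine le_csInf hne fun b hb => ?_
      obtain ⟨φ, ψ, dψ, adm, hJ, rfl⟩ := hb
      exact (main φ ψ dψ adm hJ).2
    · rw [Set.not_nonempty_iff_eq_empty.mp hne, Real.sInf_empty]
      have : 0 ≤ g * a := mul_nonneg hg.le ha0
      linarith
  · -- growth rate bound
    intro hμ
    have h1 : -(g * a) ≤ muInf S ω a s := by
      unfold muInf
      by_cases hne : {e : ℝ | ∃ φ ψ dψ : ℝ → ℝ, MemAdm m l φ ψ dψ ∧ Jen S φ ψ = 1 ∧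
          e = Een S ω a s φ ψ dψ}.Nonempty
      · refine le_csInf hne fun b hb => ?_
        obtain ⟨φ, ψ, dψ, adm, hJ, rfl⟩ := hb
        exact (main φ ψ dψ adm hJ).2
      · rw [Set.not_nonempty_iff_eq_empty.mp hne, Real.sInf_empty]
        have : 0 ≤ g * a := mul_nonneg hg.le ha0
        linarith
    exact Real.sqrt_le_sqrt (by linarith)
end

section
/- For |ξ| ≥ 2 let ψ_{|ξ|} ∈ H₀¹(−m,l) be defined by ψ_{|ξ|}(x₃) = (1 − x₃/l)^{|ξ|/2} for x₃ ∈ [0,l) and ψ_{|ξ|}(x₃) = (1 + x₃/m)^{|ξ|/2} for x₃ ∈ (−m,0). Then there exist constants A₁, A₂, A₃ > 0, depending on ρ₀±, p±, l, m, g, ω but not on |ξ|, such that for all |ξ| ≥ 2 and all s > 0: E(−ψ'_{|ξ|}/|ξ|, ψ_{|ξ|}; s) ≤ −g⟦ρ₀⟧/2 + A₁(1+s)/(1+|ξ|) and A₂/(1+|ξ|) ≤ J(−ψ'_{|ξ|}/|ξ|, ψ_{|ξ|}) ≤ A₃/(1+|ξ|); consequently there exist constants A₄, A₅, C₁ > 0,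 independent of |ξ| and s, with E(−ψ'_{|ξ|}/|ξ|, ψ_{|ξ|}; s)/J(−ψ'_{|ξ|}/|ξ|, ψ_{|ξ|}) ≤ A₄ − A₅|ξ| + C₁s. -/
open MeasureTheory Real Set Filter

/-- The test function `ψ_{|ξ|}` of (2.2.8). -/
noncomputable def ψtest (m l r : ℝ) (x : ℝ) : ℝ :=
  if x < 0 then (1 + x / m) ^ (r / 2) else (1 - x / l) ^ (r / 2)

/-- The derivative of the test function `ψ_{|ξ|}`. -/
noncomputable def dψtest (m l r : ℝ) (x : ℝ) : ℝ :=
  if x < 0 then r / 2 * (1 + x / m) ^ (r / 2 - 1) / m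
  else -(r / 2 * (1 - x / l) ^ (r / 2 - 1) / l)

section Helpers

open MeasureTheory Real Set Filter

private lemma int_rpow_pos {l a : ℝ} (hl : 0 < l) (ha : 0 ≤ a) :
    ∫ x in Ioo (0:ℝ) l, (1 - x/l) ^ a = l / (a + 1) := by
  rw [← integral_Ioc_eq_integral_Ioo, ← intervalIntegral.integral_of_le hl.le]
  have h1 : ∀ x ∈ uIcc (0:ℝ) l, (1 - x/l) ^ a = (l - x) ^ a / l ^ a := by
    intro x hx
    rw [uIcc_of_le hl.le] at hx
    rw [show (1 : ℝ) - x/l = (l - x)/l by field_simp, Real.div_rpow (by linarith [hx.2]) hl.le]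
  rw [intervalIntegral.integral_congr h1]
  have h2 : ∫ x in (0:ℝ)..l, (l - x) ^ a / l ^ a
      = (∫ x in (0:ℝ)..l, (l - x) ^ a) / l ^ a := by
    simp [intervalIntegral.integral_div]
  rw [h2]
  have h3 : ∫ x in (0:ℝ)..l, (l - x) ^ a = ∫ x in (0:ℝ)..l, x ^ a := by
    have := intervalIntegral.integral_comp_sub_left (a := 0) (b := l) (fun x => x ^ a) l
    simpa using this
  rw [h3, integral_rpow (Or.inl (by linarith))]
  rw [Real.zero_rpow (by linarith), Real.rpow_add hl, Real.rpow_one]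
  field_simp
  ring

private lemma cont_aff_rpow {e : ℝ} (he : 0 ≤ e) {f : ℝ → ℝ} (hf : Continuous f) :
    Continuous fun x => (f x) ^ e := by
  have h : Continuous fun y : ℝ => y ^ e :=
    continuous_iff_continuousAt.2 fun y => Real.continuousAt_rpow_const y e (Or.inr he)
  exact h.comp hf

private lemma intOn_crho {s : Set ℝ} (hs : MeasurableSet s) (hfin : volume s ≠ ⊤)
    {ρ β : ℝ → ℝ} (hρ : ContinuousOn ρ s) (hβ : Continuous β) {ub : ℝ}
    (hub : ∀ x ∈ s, |ρ x| ≤ ub) (hβb : ∀ x ∈ s, |β x| ≤ 1) (c : ℝ) :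
    IntegrableOn (fun x => c * ρ x * β x) s := by
  refine ⟨((continuousOn_const.mul hρ).mul hβ.continuousOn).aestronglyMeasurable hs, ?_⟩
  apply HasFiniteIntegral.restrict_of_bounded (C := |c| * ub) (lt_top_iff_ne_top.2 hfin)
  refine (ae_restrict_iff' hs).2 (Eventually.of_forall fun x hx => ?_)
  have h1 : (0:ℝ) ≤ ub := le_trans (abs_nonneg _) (hub x hx)
  have h2 : |c * ρ x * β x| = |c| * |ρ x| * |β x| := by rw [abs_mul, abs_mul]
  rw [Real.norm_eq_abs, h2]
  calc |c| * |ρ x| * |β x| ≤ |c| * ub * 1 := by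
        apply mul_le_mul (mul_le_mul le_rfl (hub x hx) (abs_nonneg _) (abs_nonneg _))
          (hβb x hx) (abs_nonneg _) (by positivity)
    _ = |c| * ub := mul_one _

private lemma reflect_int {m : ℝ} (hm : 0 < m) (f : ℝ → ℝ) :
    ∫ x in Ioo (-m) (0:ℝ), f x = ∫ x in Ioo (0:ℝ) m, f (-x) := by
  rw [← integral_Ioc_eq_integral_Ioo, ← intervalIntegral.integral_of_le (by linarith : -m ≤ (0:ℝ))]
  have h := intervalIntegral.integral_comp_neg (a := 0) (b := m) f
  simp only [neg_zero] at h
  rw [← h, intervalIntegral.integral_of_le hm.le, integral_Ioc_eq_integral_Ioo]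

private lemma split_int {m l : ℝ} (hm : 0 < m) (hl : 0 < l) {f : ℝ → ℝ}
    (h1 : IntegrableOn f (Ioo (-m) 0)) (h2 : IntegrableOn f (Ioo 0 l)) :
    ∫ x in Ioo (-m) l, f x = (∫ x in Ioo (-m) 0, f x) + ∫ x in Ioo 0 l, f x := by
  have hae : Ioo (-m) l =ᵐ[volume] ((Ioo (-m) 0 ∪ Ioo 0 l : Set ℝ)) := by
    rw [MeasureTheory.ae_eq_set]
    constructor
    · refine measure_mono_null (fun x hx => ?_) (measure_singleton (0:ℝ))
      simp only [mem_diff, mem_Ioo, mem_union, not_or, not_and, mem_singleton_iff] at hx ⊢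
      rcases hx with ⟨⟨ha, hb⟩, hc, hd⟩
      by_contra hne
      rcases lt_or_gt_of_ne hne with h | h
      · exact hc ha h
      · exact hd h hb
    · refine measure_mono_null (fun x hx => (?_ : x ∈ (∅ : Set ℝ))) (by simp)
      · simp only [mem_diff, mem_union, mem_Ioo] at hx
        rcases hx with ⟨h | h, hn⟩
        · exact (hn ⟨h.1, by linarith [h.2]⟩).elim
        · exact (hn ⟨by linarith [h.1], h.2⟩).elim
  rw [setIntegral_congr_set hae]
  refine setIntegral_union (Set.disjoint_left.2 fun x hx hx' => ?_) measurableSet_Ioo h1 h2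
  simp only [mem_Ioo] at hx hx'
  linarith [hx.2, hx'.1]

private lemma base_facts {l x : ℝ} (hl : 0 < l) (hx : x ∈ Ioo (0:ℝ) l) :
    0 < 1 - x/l ∧ 1 - x/l ≤ 1 := by
  obtain ⟨h1, h2⟩ := hx
  constructor
  · have : x/l < 1 := (div_lt_one hl).2 h2
    linarith
  · have : 0 < x/l := div_pos h1 hl
    linarith

private lemma base_facts_neg {m x : ℝ} (hm : 0 < m) (hx : x ∈ Ioo (-m) (0:ℝ)) :
    0 < 1 + x/m ∧ 1 + x/m ≤ 1 := by
  obtain ⟨h1, h2⟩ := hx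
  constructor
  · have h : (-1:ℝ) < x/m := by
      rw [lt_div_iff₀ hm]
      linarith
    linarith
  · have h : x/m < 0 := div_neg_of_neg_of_pos h2 hm
    linarith

private lemma beta_bd {l e : ℝ} (hl : 0 < l) (he : 0 ≤ e) :
    ∀ x ∈ Ioo (0:ℝ) l, |(1 - x/l) ^ e| ≤ 1 := by
  intro x hx
  obtain ⟨hb0, hb1⟩ := base_facts hl hx
  rw [abs_of_nonneg (Real.rpow_nonneg hb0.le e)]
  exact Real.rpow_le_one hb0.le hb1 he

private lemma beta_bd_neg {m e : ℝ} (hm : 0 < m) (he : 0 ≤ e) :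
    ∀ x ∈ Ioo (-m) (0:ℝ), |(1 + x/m) ^ e| ≤ 1 := by
  intro x hx
  obtain ⟨hb0, hb1⟩ := base_facts_neg hm hx
  rw [abs_of_nonneg (Real.rpow_nonneg hb0.le e)]
  exact Real.rpow_le_one hb0.le hb1 he

private lemma intOn_crho' {l : ℝ} (hl : 0 < l) {ρ : ℝ → ℝ} (hρ : ContinuousOn ρ (Ioo 0 l))
    {ub : ℝ} (hub : ∀ x ∈ Ioo (0:ℝ) l, |ρ x| ≤ ub) (c e : ℝ) (he : 0 ≤ e) :
    IntegrableOn (fun x => c * ρ x * (1 - x/l) ^ e) (Ioo 0 l) := by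
  refine intOn_crho measurableSet_Ioo (by simp [Real.volume_Ioo]) hρ
    (cont_aff_rpow he (by continuity)) hub (beta_bd hl he) c

private lemma intOn_crho_neg' {m : ℝ} (hm : 0 < m) {ρ : ℝ → ℝ}
    (hρ : ContinuousOn ρ (Ioo (-m) 0)) {ub : ℝ}
    (hub : ∀ x ∈ Ioo (-m) (0:ℝ), |ρ x| ≤ ub) (c e : ℝ) (he : 0 ≤ e) :
    IntegrableOn (fun x => c * ρ x * (1 + x/m) ^ e) (Ioo (-m) 0) := by
  refine intOn_crho measurableSet_Ioo (by simp [Real.volume_Ioo]) hρ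
    (cont_aff_rpow he (by continuity)) hub (beta_bd_neg hm he) c

private lemma int_c_rpow {l : ℝ} (hl : 0 < l) {e : ℝ} (he : 0 ≤ e) (c : ℝ) :
    ∫ x in Ioo (0:ℝ) l, c * (1 - x/l) ^ e = c * (l/(e+1)) := by
  rw [MeasureTheory.integral_const_mul, int_rpow_pos hl he]

end Helpers
private lemma side_E {l g r s ω ub L ρp ε : ℝ} (hl : 0 < l) (hg : 0 < g) (hr : 2 ≤ r) (hs : 0 ≤ s)
    {ρ : ℝ → ℝ} (hc : ContinuousOn ρ (Ioo 0 l))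
    (hub : ∀ x ∈ Ioo (0:ℝ) l, 0 ≤ ρ x ∧ ρ x ≤ ub)
    (hlip : ∀ x ∈ Ioo (0:ℝ) l, ε * ρ x ≤ ε * ρp + L * x) (hL : 0 ≤ L) :
    ∫ x in Ioo (0:ℝ) l,
        (ε * (g*r/l) * ρ x * (1 - x/l) ^ (r-1) + (ω^2*s/l^2) * ρ x * (1 - x/l) ^ (r-2))
      ≤ ε * (g*ρp) + g*L*l/(r+1) + ω^2*s*ub/(l*(r-1)) := by
  have he1 : (0:ℝ) ≤ r - 1 := by linarith
  have he2 : (0:ℝ) ≤ r - 2 := by linarith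
  have he0 : (0:ℝ) ≤ r := by linarith
  have hub' : ∀ x ∈ Ioo (0:ℝ) l, |ρ x| ≤ ub := fun x hx =>
    abs_le.2 ⟨by linarith [(hub x hx).1, (hub x hx).2], (hub x hx).2⟩
  have hub0 : (0:ℝ) ≤ ub := by
    have hmem : l/2 ∈ Ioo (0:ℝ) l := ⟨by linarith, by linarith⟩
    linarith [(hub _ hmem).1, (hub _ hmem).2]
  have hone : ∀ x ∈ Ioo (0:ℝ) l, |(1:ℝ)| ≤ (1:ℝ) := fun x _ => by norm_num
  -- bounding function h
  set A := ε * (g*r/l) * ρp + g*r*L with hA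
  set B := -(g*r*L) with hB
  set C := (ω^2*s/l^2) * ub with hC
  have hint_lhs : IntegrableOn (fun x =>
      ε * (g*r/l) * ρ x * (1 - x/l) ^ (r-1) + (ω^2*s/l^2) * ρ x * (1 - x/l) ^ (r-2)) (Ioo 0 l) :=
    (intOn_crho' hl hc hub' _ _ he1).add (intOn_crho' hl hc hub' _ _ he2)
  have hcont1 : ContinuousOn (fun _ : ℝ => (1:ℝ)) (Ioo (0:ℝ) l) := continuousOn_const
  have hint1 : IntegrableOn (fun x => A * (1:ℝ) * (1 - x/l) ^ (r-1)) (Ioo 0 l) :=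
    intOn_crho' hl hcont1 hone A _ he1
  have hint2 : IntegrableOn (fun x => B * (1:ℝ) * (1 - x/l) ^ r) (Ioo 0 l) :=
    intOn_crho' hl hcont1 hone B _ he0
  have hint3 : IntegrableOn (fun x => C * (1:ℝ) * (1 - x/l) ^ (r-2)) (Ioo 0 l) :=
    intOn_crho' hl hcont1 hone C _ he2
  have hint_h : IntegrableOn (fun x => A * (1:ℝ) * (1 - x/l) ^ (r-1)
      + B * (1:ℝ) * (1 - x/l) ^ r + C * (1:ℝ) * (1 - x/l) ^ (r-2)) (Ioo 0 l) :=
    (hint1.add hint2).add hint3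
  have hint12 : IntegrableOn (fun x => A * (1:ℝ) * (1 - x/l) ^ (r-1)
      + B * (1:ℝ) * (1 - x/l) ^ r) (Ioo 0 l) := hint1.add hint2
  have hmono := setIntegral_mono_on hint_lhs hint_h measurableSet_Ioo ?_
  · refine le_trans hmono ?_
    have eint : ∫ x in Ioo (0:ℝ) l, (A * (1:ℝ) * (1 - x/l) ^ (r-1)
        + B * (1:ℝ) * (1 - x/l) ^ r + C * (1:ℝ) * (1 - x/l) ^ (r-2))
        = A * (l/((r-1)+1)) + B * (l/(r+1)) + C * (l/((r-2)+1)) := by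
      rw [integral_add hint12 hint3, integral_add hint1 hint2]
      simp only [mul_one]
      rw [int_c_rpow hl he1, int_c_rpow hl he0, int_c_rpow hl he2]
    rw [eint]
    have h1 : r - 1 + 1 = r := by ring
    have h3 : r - 2 + 1 = r - 1 := by ring
    rw [h1, h3]
    have hr0 : r ≠ 0 := by linarith
    have hr1 : r + 1 ≠ 0 := by linarith
    have hr2 : r - 1 ≠ 0 := by linarith
    have hl0 : l ≠ 0 := ne_of_gt hl
    rw [hA, hB, hC]
    -- goal: (ε*(g*r/l)*ρp + g*r*L)*(l/r) + (-(g*r*L))*(l/(r+1)) + (ω^2*s/l^2)*ub*(l/(r-1))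
    --       ≤ ε*(g*ρp) + g*L*l/(r+1) + ω^2*s*ub/(l*(r-1))
    apply le_of_eq
    field_simp
    ring
  · intro x hx
    obtain ⟨hb0, hb1⟩ := base_facts hl hx
    set b := 1 - x/l with hbdef
    have hbb : b ^ (r-1) * b = b ^ r := by
      nth_rewrite 2 [← Real.rpow_one b]
      rw [← Real.rpow_add hb0]
      congr 1
      ring
    have hxb : l * (1 - b) = x := by
      rw [hbdef]
      field_simp
      ring
    have key1 : x * b ^ (r-1) = l * (b ^ (r-1) - b ^ r) := by
      rw [← hbb, ← hxb]
      ring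
    have hp1 : (0:ℝ) ≤ b ^ (r-1) := Real.rpow_nonneg hb0.le _
    have hp2 : (0:ℝ) ≤ b ^ (r-2) := Real.rpow_nonneg hb0.le _
    have hc1 : (0:ℝ) ≤ g*r/l := by positivity
    have hc2 : (0:ℝ) ≤ ω^2*s/l^2 := by positivity
    have t1 := hlip x hx
    have step1 : ε * (g*r/l) * ρ x * b ^ (r-1) ≤ A * b ^ (r-1) + B * b ^ r := by
      have hm := mul_le_mul_of_nonneg_left t1 (mul_nonneg hc1 hp1)
      -- (g*r/l * b^(r-1)) * (ε * ρ x) ≤ (g*r/l * b^(r-1)) * (ε*ρp + L*x)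
      have e2 : (g*r/l * b ^ (r-1)) * (ε*ρp + L*x) = A * b ^ (r-1) + B * b ^ r := by
        rw [hA, hB]
        have : g*r/l * b ^ (r-1) * (L * x) = g*r*L*(b ^ (r-1) - b ^ r) := by
          have hx' : g*r/l * b ^ (r-1) * (L*x) = (g*r*L/l) * (x * b ^ (r-1)) := by ring
          rw [hx', key1]
          field_simp
        calc (g*r/l * b ^ (r-1)) * (ε*ρp + L*x)
            = ε * (g*r/l) * ρp * b ^ (r-1) + g*r/l * b ^ (r-1) * (L * x) := by ring
          _ = ε * (g*r/l) * ρp * b ^ (r-1) + g*r*L*(b ^ (r-1) - b ^ r) := by rw [this]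
          _ = (ε * (g*r/l) * ρp + g*r*L) * b ^ (r-1) + -(g*r*L) * b ^ r := by ring
      calc ε * (g*r/l) * ρ x * b ^ (r-1) = (g*r/l * b ^ (r-1)) * (ε * ρ x) := by ring
        _ ≤ (g*r/l * b ^ (r-1)) * (ε*ρp + L*x) := hm
        _ = A * b ^ (r-1) + B * b ^ r := e2
    have step2 : (ω^2*s/l^2) * ρ x * b ^ (r-2) ≤ C * b ^ (r-2) := by
      rw [hC]
      have := mul_le_mul_of_nonneg_left (hub x hx).2 (mul_nonneg hc2 hp2)
      calc (ω^2*s/l^2) * ρ x * b ^ (r-2) = ((ω^2*s/l^2) * b ^ (r-2)) * ρ x := by ring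
        _ ≤ ((ω^2*s/l^2) * b ^ (r-2)) * ub := this
        _ = (ω^2*s/l^2) * ub * (1:ℝ) * b ^ (r-2) := by ring
        _ = (ω^2*s/l^2) * ub * b ^ (r-2) := by ring
    calc ε * (g*r/l) * ρ x * b ^ (r-1) + (ω^2*s/l^2) * ρ x * b ^ (r-2)
        ≤ (A * b ^ (r-1) + B * b ^ r) + C * b ^ (r-2) := add_le_add step1 step2
      _ = A * 1 * b ^ (r-1) + B * 1 * b ^ r + C * 1 * b ^ (r-2) := by ring

private lemma side_J {l r lb ub : ℝ} (hl : 0 < l) (hr : 2 ≤ r) {ρ : ℝ → ℝ}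
    (hc : ContinuousOn ρ (Ioo 0 l)) (hbd : ∀ x ∈ Ioo (0:ℝ) l, lb ≤ ρ x ∧ ρ x ≤ ub)
    (hlb : 0 ≤ lb) :
    lb * (l/(r+1)) ≤ (∫ x in Ioo (0:ℝ) l,
        ρ x * ((1/(4*l^2)) * (1 - x/l) ^ (r-2) + (1 - x/l) ^ r))
    ∧ (∫ x in Ioo (0:ℝ) l, ρ x * ((1/(4*l^2)) * (1 - x/l) ^ (r-2) + (1 - x/l) ^ r))
        ≤ ub * ((1/(4*l^2)) * (l/(r-1)) + l/(r+1)) := by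
  have he2 : (0:ℝ) ≤ r - 2 := by linarith
  have he0 : (0:ℝ) ≤ r := by linarith
  have hub' : ∀ x ∈ Ioo (0:ℝ) l, |ρ x| ≤ ub := fun x hx =>
    abs_le.2 ⟨by linarith [(hbd x hx).1, (hbd x hx).2], (hbd x hx).2⟩
  have hone : ∀ x ∈ Ioo (0:ℝ) l, |(1:ℝ)| ≤ (1:ℝ) := fun x _ => by norm_num
  have hcont1 : ContinuousOn (fun _ : ℝ => (1:ℝ)) (Ioo (0:ℝ) l) := continuousOn_const
  have hmid : IntegrableOn (fun x =>
      (1/(4*l^2)) * ρ x * (1 - x/l) ^ (r-2) + 1 * ρ x * (1 - x/l) ^ r) (Ioo 0 l) :=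
    (intOn_crho' hl hc hub' _ _ he2).add (intOn_crho' hl hc hub' _ _ he0)
  have heq : ∀ x ∈ Ioo (0:ℝ) l, ρ x * ((1/(4*l^2)) * (1 - x/l) ^ (r-2) + (1 - x/l) ^ r)
      = (1/(4*l^2)) * ρ x * (1 - x/l) ^ (r-2) + 1 * ρ x * (1 - x/l) ^ r := fun x _ => by ring
  rw [setIntegral_congr_fun measurableSet_Ioo heq]
  constructor
  · have hlo : IntegrableOn (fun x => lb * (1:ℝ) * (1 - x/l) ^ r) (Ioo 0 l) :=
      intOn_crho' hl hcont1 hone lb _ he0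
    have hmono := setIntegral_mono_on hlo hmid measurableSet_Ioo ?_
    · have hval : ∫ x in Ioo (0:ℝ) l, lb * (1:ℝ) * (1 - x/l) ^ r = lb * (l/(r+1)) := by
        have h := int_c_rpow hl he0 lb
        simp only [mul_one]
        exact h
      rw [← hval]
      exact hmono
    · intro x hx
      obtain ⟨hb0, hb1⟩ := base_facts hl hx
      have hp2 : (0:ℝ) ≤ (1 - x/l) ^ (r-2) := Real.rpow_nonneg hb0.le _
      have hp0 : (0:ℝ) ≤ (1 - x/l) ^ r := Real.rpow_nonneg hb0.le _
      have h1 := (hbd x hx).1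
      have t1 : lb * (1 - x/l) ^ r ≤ ρ x * (1 - x/l) ^ r := mul_le_mul_of_nonneg_right h1 hp0
      have t2 : (0:ℝ) ≤ 1/(4*l^2) * ρ x * (1 - x/l) ^ (r-2) := by
        have hρ0 : (0:ℝ) ≤ ρ x := by linarith
        have hcc : (0:ℝ) ≤ (1/(4*l^2)) := by positivity
        exact mul_nonneg (mul_nonneg hcc hρ0) hp2
      linarith
  · have hhi1 : IntegrableOn (fun x => (1/(4*l^2)) * ub * (1:ℝ) * (1 - x/l) ^ (r-2)) (Ioo 0 l) :=
      intOn_crho' hl hcont1 hone ((1/(4*l^2)) * ub) _ he2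
    have hhi2 : IntegrableOn (fun x => ub * (1:ℝ) * (1 - x/l) ^ r) (Ioo 0 l) :=
      intOn_crho' hl hcont1 hone ub _ he0
    have hhi : IntegrableOn (fun x => (1/(4*l^2)) * ub * (1:ℝ) * (1 - x/l) ^ (r-2)
        + ub * (1:ℝ) * (1 - x/l) ^ r) (Ioo 0 l) := hhi1.add hhi2
    have hmono := setIntegral_mono_on hmid hhi measurableSet_Ioo ?_
    · refine le_trans hmono ?_
      have hval : ∫ x in Ioo (0:ℝ) l, ((1/(4*l^2)) * ub * (1:ℝ) * (1 - x/l) ^ (r-2)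
          + ub * (1:ℝ) * (1 - x/l) ^ r)
          = (1/(4*l^2)) * ub * (l/((r-2)+1)) + ub * (l/(r+1)) := by
        rw [integral_add hhi1 hhi2]
        simp only [mul_one]
        rw [int_c_rpow hl he2, int_c_rpow hl he0]
      rw [hval]
      have h3 : r - 2 + 1 = r - 1 := by ring
      rw [h3]
      apply le_of_eq
      ring
    · intro x hx
      obtain ⟨hb0, hb1⟩ := base_facts hl hx
      have hp2 : (0:ℝ) ≤ (1 - x/l) ^ (r-2) := Real.rpow_nonneg hb0.le _
      have hp0 : (0:ℝ) ≤ (1 - x/l) ^ r := Real.rpow_nonneg hb0.le _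
      have h2 := (hbd x hx).2
      have hc2 : (0:ℝ) ≤ (1/(4*l^2)) := by positivity
      have t1 : 1/(4*l^2) * ρ x * (1 - x/l) ^ (r-2) ≤ 1/(4*l^2) * ub * 1 * (1 - x/l) ^ (r-2) := by
        have := mul_le_mul_of_nonneg_right (mul_le_mul_of_nonneg_left h2 hc2) hp2
        calc 1/(4*l^2) * ρ x * (1 - x/l) ^ (r-2) ≤ 1/(4*l^2) * ub * (1 - x/l) ^ (r-2) := this
          _ = 1/(4*l^2) * ub * 1 * (1 - x/l) ^ (r-2) := by ring
      have t2 : 1 * ρ x * (1 - x/l) ^ r ≤ ub * 1 * (1 - x/l) ^ r := by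
        have := mul_le_mul_of_nonneg_right h2 hp0
        calc 1 * ρ x * (1 - x/l) ^ r = ρ x * (1 - x/l) ^ r := by ring
          _ ≤ ub * (1 - x/l) ^ r := this
          _ = ub * 1 * (1 - x/l) ^ r := by ring
      linarith
private lemma arith_E {K1 K2 s r : ℝ} (hK1 : 0 ≤ K1) (hK2 : 0 ≤ K2) (hs : 0 < s) (hr : 2 ≤ r) :
    K1/(r+1) + K2*s/(r-1) ≤ (K1 + 3*K2 + 1)*(1+s)/(1+r) := by
  have h2 : (0:ℝ) < r - 1 := by linarith
  have h1 : (0:ℝ) < r + 1 := by linarith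
  have key : K1/(r+1) + K2*s/(r-1) ≤ K1*(1+s)/(1+r) + 3*K2*(1+s)/(1+r) + 1*(1+s)/(1+r) := by
    have e1 : K1/(r+1) ≤ K1*(1+s)/(1+r) := by
      rw [div_le_div_iff₀ h1 (by linarith)]
      nlinarith [mul_nonneg (mul_nonneg hK1 hs.le) h1.le]
    have e2 : K2*s/(r-1) ≤ 3*K2*(1+s)/(1+r) := by
      rw [div_le_div_iff₀ h2 (by linarith)]
      nlinarith [mul_nonneg (mul_nonneg hK2 hs.le) (by linarith : (0:ℝ) ≤ 2*r-4),
        mul_nonneg hK2 (by linarith : (0:ℝ) ≤ 3*r-3)]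
    have e3 : (0:ℝ) ≤ 1*(1+s)/(1+r) := by positivity
    linarith
  calc K1/(r+1) + K2*s/(r-1) ≤ K1*(1+s)/(1+r) + 3*K2*(1+s)/(1+r) + 1*(1+s)/(1+r) := key
    _ = (K1 + 3*K2 + 1)*(1+s)/(1+r) := by ring

private lemma arith_J {D1 D2 r : ℝ} (hD1 : 0 ≤ D1) (hD2 : 0 ≤ D2) (hr : 2 ≤ r) :
    D1/(r-1) + D2/(r+1) ≤ (3*D1 + D2)/(1+r) := by
  have h2 : (0:ℝ) < r - 1 := by linarith
  have h1 : (0:ℝ) < r + 1 := by linarith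
  have e1 : D1/(r-1) ≤ 3*D1/(1+r) := by
    rw [div_le_div_iff₀ h2 (by linarith)]
    nlinarith [mul_nonneg hD1 (by linarith : (0:ℝ) ≤ 2*r-4)]
  have e2 : D2/(r+1) = D2/(1+r) := by ring_nf
  have : 3*D1/(1+r) + D2/(1+r) = (3*D1+D2)/(1+r) := by ring
  linarith
private lemma rho_lip {m l g : ℝ} (hm : 0 < m) (hl : 0 < l) (hg : 0 < g)
    {Pp Pm : PressureLaw} (S : SteadyState m l g Pp Pm) :
    ∃ L : ℝ, 0 < L ∧ (∀ x ∈ Set.Ioo (0:ℝ) l, |S.ρ x - S.ρplus| ≤ L * x) ∧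
      (∀ x ∈ Set.Ioo (-m) (0:ℝ), |S.ρ x - S.ρminus| ≤ L * (-x)) := by
  have hml : -m < l := by linarith
  have hsub_pos : Set.Ioo (0:ℝ) l ⊆ Set.Ioo (-m) l := fun x hx => ⟨by linarith [hx.1], hx.2⟩
  have hsub_neg : Set.Ioo (-m) (0:ℝ) ⊆ Set.Ioo (-m) l := fun x hx => ⟨hx.1, by linarith [hx.2]⟩
  have hK : IsCompact (Set.Icc S.lb S.ub) := isCompact_Icc
  have hKsub : Set.Icc S.lb S.ub ⊆ Set.Ioi 0 := fun z hz => lt_of_lt_of_le S.lb_pos hz.1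
  obtain ⟨Cp, hCp⟩ := Pp.inv_dp_locBdd _ hK hKsub
  obtain ⟨Cm, hCm⟩ := Pm.inv_dp_locBdd _ hK hKsub
  set C := max (max Cp Cm) 0 with hCdef
  have hC0 : 0 ≤ C := le_max_right _ _
  set L := g * S.ub * C + 1 with hLdef
  have hub0 : 0 < S.ub := by
    have hmem : l/2 ∈ Set.Ioo (-m) l := ⟨by linarith, by linarith⟩
    linarith [(S.bounds _ hmem).1, (S.bounds _ hmem).2, S.lb_pos]
  have hL0 : 0 < L := by positivity
  refine ⟨L, hL0, ?_, ?_⟩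
  · -- positive side
    have hderiv_bd : ∀ x ∈ Set.Ioo (0:ℝ) l, ‖S.dρ x‖ ≤ L := by
      intro x hx
      have hρmem : S.ρ x ∈ Set.Icc S.lb S.ub :=
        ⟨(S.bounds _ (hsub_pos hx)).1, (S.bounds _ (hsub_pos hx)).2⟩
      have hρpos : 0 < S.ρ x := lt_of_lt_of_le S.lb_pos hρmem.1
      have hdp_pos : 0 < Pp.dp (S.ρ x) := Pp.dp_pos _ (hKsub hρmem)
      have hode := S.ode_pos x hx
      have hdρ : S.dρ x = -(g * S.ρ x) / Pp.dp (S.ρ x) := by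
        field_simp
        linarith [hode]
      rw [Real.norm_eq_abs, hdρ, abs_div, abs_neg,
        abs_of_nonneg (by positivity : (0:ℝ) ≤ g * S.ρ x), abs_of_pos hdp_pos,
        div_eq_mul_inv, ← one_div]
      have h1 : 1 / Pp.dp (S.ρ x) ≤ C :=
        le_trans (hCp _ hρmem) (le_trans (le_max_left _ _) (le_max_left _ _))
      have h2 : 0 ≤ 1 / Pp.dp (S.ρ x) := by positivity
      have h3 : g * S.ρ x ≤ g * S.ub := by nlinarith [hρmem.2]
      have h4 := mul_le_mul h3 h1 h2 (by positivity)
      rw [hLdef]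
      linarith
    have hmvt : ∀ x ∈ Set.Ioo (0:ℝ) l, ∀ y ∈ Set.Ioo (0:ℝ) l,
        ‖S.ρ x - S.ρ y‖ ≤ L * ‖x - y‖ := by
      intro x hx y hy
      exact Convex.norm_image_sub_le_of_norm_hasDerivWithin_le
        (fun z hz => (S.deriv_pos z hz).hasDerivWithinAt) hderiv_bd (convex_Ioo _ _) hy hx
    intro x hx
    have hev : ∀ᶠ y in nhdsWithin 0 (Set.Ioi 0), |S.ρ x - S.ρ y| ≤ L * (x - y) := by
      filter_upwards [Ioo_mem_nhdsGT_of_mem (⟨le_refl (0:ℝ), hx.1⟩ : (0:ℝ) ∈ Set.Ico 0 x)]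
        with y hy
      have hy' : y ∈ Set.Ioo (0:ℝ) l := ⟨hy.1, lt_trans hy.2 hx.2⟩
      have := hmvt x hx y hy'
      rw [Real.norm_eq_abs, Real.norm_eq_abs] at this
      rwa [abs_of_pos (by linarith [hy.2] : 0 < x - y)] at this
    have h1 : Tendsto (fun y => |S.ρ x - S.ρ y|) (nhdsWithin 0 (Set.Ioi 0))
        (nhds |S.ρ x - S.ρplus|) := (tendsto_const_nhds.sub S.lim_plus).abs
    have h2 : Tendsto (fun y : ℝ => L * (x - y)) (nhdsWithin 0 (Set.Ioi 0))
        (nhds (L * (x - 0))) :=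
      ((tendsto_const_nhds.sub (tendsto_id.mono_left nhdsWithin_le_nhds)).const_mul L)
    have := le_of_tendsto_of_tendsto h1 h2 hev
    simpa using this
  · -- negative side
    have hderiv_bd : ∀ x ∈ Set.Ioo (-m) (0:ℝ), ‖S.dρ x‖ ≤ L := by
      intro x hx
      have hρmem : S.ρ x ∈ Set.Icc S.lb S.ub :=
        ⟨(S.bounds _ (hsub_neg hx)).1, (S.bounds _ (hsub_neg hx)).2⟩
      have hρpos : 0 < S.ρ x := lt_of_lt_of_le S.lb_pos hρmem.1
      have hdp_pos : 0 < Pm.dp (S.ρ x) := Pm.dp_pos _ (hKsub hρmem)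
      have hode := S.ode_neg x hx
      have hdρ : S.dρ x = -(g * S.ρ x) / Pm.dp (S.ρ x) := by
        field_simp
        linarith [hode]
      rw [Real.norm_eq_abs, hdρ, abs_div, abs_neg,
        abs_of_nonneg (by positivity : (0:ℝ) ≤ g * S.ρ x), abs_of_pos hdp_pos,
        div_eq_mul_inv, ← one_div]
      have h1 : 1 / Pm.dp (S.ρ x) ≤ C :=
        le_trans (hCm _ hρmem) (le_trans (le_max_right _ _) (le_max_left _ _))
      have h2 : 0 ≤ 1 / Pm.dp (S.ρ x) := by positivity
      have h3 : g * S.ρ x ≤ g * S.ub := by nlinarith [hρmem.2]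
      have h4 := mul_le_mul h3 h1 h2 (by positivity)
      rw [hLdef]
      linarith
    have hmvt : ∀ x ∈ Set.Ioo (-m) (0:ℝ), ∀ y ∈ Set.Ioo (-m) (0:ℝ),
        ‖S.ρ x - S.ρ y‖ ≤ L * ‖x - y‖ := by
      intro x hx y hy
      exact Convex.norm_image_sub_le_of_norm_hasDerivWithin_le
        (fun z hz => (S.deriv_neg z hz).hasDerivWithinAt) hderiv_bd (convex_Ioo _ _) hy hx
    intro x hx
    have hev : ∀ᶠ y in nhdsWithin 0 (Set.Iio 0), |S.ρ x - S.ρ y| ≤ L * (y - x) := by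
      filter_upwards [Ioo_mem_nhdsLT_of_mem (⟨hx.2, le_refl (0:ℝ)⟩ : (0:ℝ) ∈ Set.Ioc x 0)]
        with y hy
      have hy' : y ∈ Set.Ioo (-m) (0:ℝ) := ⟨lt_trans hx.1 hy.1, hy.2⟩
      have := hmvt x hx y hy'
      rw [Real.norm_eq_abs, Real.norm_eq_abs] at this
      rwa [abs_of_neg (by linarith [hy.1] : x - y < 0), neg_sub] at this
    have h1 : Tendsto (fun y => |S.ρ x - S.ρ y|) (nhdsWithin 0 (Set.Iio 0))
        (nhds |S.ρ x - S.ρminus|) := (tendsto_const_nhds.sub S.lim_minus).abs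
    have h2 : Tendsto (fun y : ℝ => L * (y - x)) (nhdsWithin 0 (Set.Iio 0))
        (nhds (L * (0 - x))) :=
      (((tendsto_id.mono_left nhdsWithin_le_nhds).sub tendsto_const_nhds).const_mul L)
    have := le_of_tendsto_of_tendsto h1 h2 hev
    simpa using this
private lemma EI_eq_pos {m l g ω s r : ℝ} (hl : 0 < l) (hr0 : r ≠ 0) (ρ pd : ℝ → ℝ) :
    Set.EqOn (fun x => pd x * ρ x * (dψtest m l r x + r * (-(dψtest m l r x) / r)) ^ 2
        - 2*g*r*ρ x*ψtest m l r x*(-(dψtest m l r x)/r)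
        + 4*ω^2*s*ρ x*(-(dψtest m l r x)/r)^2)
      (fun x => (-1:ℝ)*(g*r/l)*ρ x*(1-x/l)^(r-1) + (ω^2*s/l^2)*ρ x*(1-x/l)^(r-2))
      (Set.Ioo 0 l) := by
  intro x hx
  have hx0 : ¬ x < 0 := not_lt.mpr hx.1.le
  have hb0 : 0 < 1 - x/l := (base_facts hl hx).1
  have hl0 : l ≠ 0 := ne_of_gt hl
  simp only [ψtest, dψtest, if_neg hx0]
  have e1 : (1-x/l)^(r/2) * (1-x/l)^(r/2-1) = (1-x/l)^(r-1) := by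
    rw [← Real.rpow_add hb0]; congr 1; ring
  have e2 : (1-x/l)^(r/2-1) * (1-x/l)^(r/2-1) = (1-x/l)^(r-2) := by
    rw [← Real.rpow_add hb0]; congr 1; ring
  rw [← e1, ← e2]
  field_simp
  ring

private lemma EI_eq_neg {m l g ω s r : ℝ} (hm : 0 < m) (hr0 : r ≠ 0) (ρ pd : ℝ → ℝ) :
    Set.EqOn (fun x => pd x * ρ x * (dψtest m l r x + r * (-(dψtest m l r x) / r)) ^ 2
        - 2*g*r*ρ x*ψtest m l r x*(-(dψtest m l r x)/r)
        + 4*ω^2*s*ρ x*(-(dψtest m l r x)/r)^2)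
      (fun x => (1:ℝ)*(g*r/m)*ρ x*(1+x/m)^(r-1) + (ω^2*s/m^2)*ρ x*(1+x/m)^(r-2))
      (Set.Ioo (-m) 0) := by
  intro x hx
  have hx0 : x < 0 := hx.2
  have hb0 : 0 < 1 + x/m := (base_facts_neg hm hx).1
  have hm0 : m ≠ 0 := ne_of_gt hm
  simp only [ψtest, dψtest, if_pos hx0]
  have e1 : (1+x/m)^(r/2) * (1+x/m)^(r/2-1) = (1+x/m)^(r-1) := by
    rw [← Real.rpow_add hb0]; congr 1; ring
  have e2 : (1+x/m)^(r/2-1) * (1+x/m)^(r/2-1) = (1+x/m)^(r-2) := by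
    rw [← Real.rpow_add hb0]; congr 1; ring
  rw [← e1, ← e2]
  field_simp
  ring

private lemma JI_eq_pos {m l r : ℝ} (hl : 0 < l) (hr0 : r ≠ 0) (ρ : ℝ → ℝ) :
    Set.EqOn (fun x => ρ x * ((-(dψtest m l r x) / r) ^ 2 + (ψtest m l r x) ^ 2))
      (fun x => ρ x * ((1/(4*l^2)) * (1-x/l)^(r-2) + (1-x/l)^r)) (Set.Ioo 0 l) := by
  intro x hx
  have hx0 : ¬ x < 0 := not_lt.mpr hx.1.le
  have hb0 : 0 < 1 - x/l := (base_facts hl hx).1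
  have hl0 : l ≠ 0 := ne_of_gt hl
  simp only [ψtest, dψtest, if_neg hx0]
  have e2 : (1-x/l)^(r/2-1) * (1-x/l)^(r/2-1) = (1-x/l)^(r-2) := by
    rw [← Real.rpow_add hb0]; congr 1; ring
  have e3 : (1-x/l)^(r/2) * (1-x/l)^(r/2) = (1-x/l)^r := by
    rw [← Real.rpow_add hb0]; congr 1; ring
  rw [← e2, ← e3]
  field_simp
  ring

private lemma JI_eq_neg {m l r : ℝ} (hm : 0 < m) (hr0 : r ≠ 0) (ρ : ℝ → ℝ) :
    Set.EqOn (fun x => ρ x * ((-(dψtest m l r x) / r) ^ 2 + (ψtest m l r x) ^ 2))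
      (fun x => ρ x * ((1/(4*m^2)) * (1+x/m)^(r-2) + (1+x/m)^r)) (Set.Ioo (-m) 0) := by
  intro x hx
  have hx0 : x < 0 := hx.2
  have hb0 : 0 < 1 + x/m := (base_facts_neg hm hx).1
  have hm0 : m ≠ 0 := ne_of_gt hm
  simp only [ψtest, dψtest, if_pos hx0]
  have e2 : (1+x/m)^(r/2-1) * (1+x/m)^(r/2-1) = (1+x/m)^(r-2) := by
    rw [← Real.rpow_add hb0]; congr 1; ring
  have e3 : (1+x/m)^(r/2) * (1+x/m)^(r/2) = (1+x/m)^r := by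
    rw [← Real.rpow_add hb0]; congr 1; ring
  rw [← e2, ← e3]
  field_simp
  ring

set_option maxHeartbeats 1000000 in
/-- **The test-function bounds (2.2.9), (2.2.0110123) and (112.2.0111)**. -/
theorem test_function_bounds
    {m l g : ℝ} (hm : 0 < m) (hl : 0 < l) (hg : 0 < g) (ω : ℝ)
    {Pp Pm : PressureLaw} (S : SteadyState m l g Pp Pm) :
    ∃ A₁ A₂ A₃ A₄ A₅ C₁ : ℝ,
      0 < A₁ ∧ 0 < A₂ ∧ 0 < A₃ ∧ 0 < A₄ ∧ 0 < A₅ ∧ 0 < C₁ ∧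
      ∀ ξ : ℝ × ℝ, ∀ s : ℝ, 2 ≤ mag ξ → 0 < s →
        Een S ω (mag ξ) s (fun x => -(dψtest m l (mag ξ) x) / mag ξ)
            (ψtest m l (mag ξ)) (dψtest m l (mag ξ))
          ≤ -(g * S.jump) / 2 + A₁ * (1 + s) / (1 + mag ξ)
        ∧ A₂ / (1 + mag ξ)
          ≤ Jen S (fun x => -(dψtest m l (mag ξ) x) / mag ξ) (ψtest m l (mag ξ))
        ∧ Jen S (fun x => -(dψtest m l (mag ξ) x) / mag ξ) (ψtest m l (mag ξ))
          ≤ A₃ / (1 + mag ξ)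
        ∧ Een S ω (mag ξ) s (fun x => -(dψtest m l (mag ξ) x) / mag ξ)
              (ψtest m l (mag ξ)) (dψtest m l (mag ξ))
            / Jen S (fun x => -(dψtest m l (mag ξ) x) / mag ξ) (ψtest m l (mag ξ))
          ≤ A₄ - A₅ * mag ξ + C₁ * s := by
  obtain ⟨L, hL0, hlipP, hlipM⟩ := rho_lip hm hl hg S
  have hml : -m < l := by linarith
  have hmem2 : l/2 ∈ Set.Ioo (-m) l := ⟨by linarith, by linarith⟩
  have hub0 : 0 < S.ub := lt_of_lt_of_le S.lb_pos
    (le_trans (S.bounds _ hmem2).1 (S.bounds _ hmem2).2)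
  have hlbub : S.lb ≤ S.ub := le_trans (S.bounds _ hmem2).1 (S.bounds _ hmem2).2
  have hlb0 := S.lb_pos
  have hjump : 0 < S.jump := S.jump_pos
  set K1 : ℝ := g*L*(l+m)/2 with hK1def
  set K2 : ℝ := ω^2*S.ub*(1/l+1/m)/2 with hK2def
  set D1 : ℝ := S.ub*(1/(4*l)+1/(4*m))/2 with hD1def
  set D2 : ℝ := S.ub*(l+m)/2 with hD2def
  set cJ : ℝ := g*S.jump/2 with hcJdef
  set A₁ : ℝ := K1 + 3*K2 + 1 with hA1def
  set A₂ : ℝ := S.lb*(l+m)/2 with hA2def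
  set A₃ : ℝ := 3*D1 + D2 with hA3def
  have hK1 : 0 ≤ K1 := by rw [hK1def]; positivity
  have hK2 : 0 ≤ K2 := by rw [hK2def]; positivity
  have hD1p : 0 < D1 := by rw [hD1def]; positivity
  have hD2p : 0 < D2 := by rw [hD2def]; positivity
  have hA1 : 0 < A₁ := by rw [hA1def]; linarith
  have hA2 : 0 < A₂ := by rw [hA2def]; positivity
  have hA3 : 0 < A₃ := by rw [hA3def]; linarith
  have hcJ : 0 < cJ := by rw [hcJdef]; positivity
  have hA23 : A₂ ≤ A₃ := by
    rw [hA2def, hA3def, hD1def, hD2def]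
    nlinarith
  refine ⟨A₁, A₂, A₃, A₁/A₂, cJ/A₃, A₁/A₂, hA1, hA2, hA3, by positivity, by positivity,
    by positivity, ?_⟩
  intro ξ s hr2 hs
  set r : ℝ := mag ξ with hrdef
  have hrpos : (0:ℝ) < r := by linarith
  have hr0 : r ≠ 0 := ne_of_gt hrpos
  have hr1 : (0:ℝ) < 1 + r := by linarith
  have he1 : (0:ℝ) ≤ r - 1 := by linarith
  have he2 : (0:ℝ) ≤ r - 2 := by linarith
  have he0 : (0:ℝ) ≤ r := by linarith
  have hrm1 : (0:ℝ) < r - 1 := by linarith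
  have hlne : l ≠ 0 := ne_of_gt hl
  have hmne : m ≠ 0 := ne_of_gt hm
  -- continuity and bounds of ρ
  have hcρpos : ContinuousOn S.ρ (Set.Ioo 0 l) := S.smooth_pos.continuousOn
  have hcρneg : ContinuousOn S.ρ (Set.Ioo (-m) 0) := S.smooth_neg.continuousOn
  have hsub_pos : Set.Ioo (0:ℝ) l ⊆ Set.Ioo (-m) l := fun x hx => ⟨by linarith [hx.1], hx.2⟩
  have hsub_neg : Set.Ioo (-m) (0:ℝ) ⊆ Set.Ioo (-m) l := fun x hx => ⟨hx.1, by linarith [hx.2]⟩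
  have hbnd_pos : ∀ x ∈ Set.Ioo (0:ℝ) l, 0 ≤ S.ρ x ∧ S.ρ x ≤ S.ub := fun x hx =>
    ⟨le_trans S.lb_pos.le (S.bounds _ (hsub_pos hx)).1, (S.bounds _ (hsub_pos hx)).2⟩
  have habs_pos : ∀ x ∈ Set.Ioo (0:ℝ) l, |S.ρ x| ≤ S.ub := fun x hx =>
    abs_le.2 ⟨by linarith [(hbnd_pos x hx).1, (hbnd_pos x hx).2, hub0], (hbnd_pos x hx).2⟩
  have hbnd_neg : ∀ x ∈ Set.Ioo (-m) (0:ℝ), 0 ≤ S.ρ x ∧ S.ρ x ≤ S.ub := fun x hx =>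
    ⟨le_trans S.lb_pos.le (S.bounds _ (hsub_neg hx)).1, (S.bounds _ (hsub_neg hx)).2⟩
  have habs_neg : ∀ x ∈ Set.Ioo (-m) (0:ℝ), |S.ρ x| ≤ S.ub := fun x hx =>
    abs_le.2 ⟨by linarith [(hbnd_neg x hx).1, (hbnd_neg x hx).2, hub0], (hbnd_neg x hx).2⟩
  have hmapsTo : ∀ x ∈ Set.Ioo (0:ℝ) m, -x ∈ Set.Ioo (-m) (0:ℝ) := fun x hx =>
    ⟨by linarith [hx.2], by linarith [hx.1]⟩
  have hcρn : ContinuousOn (fun x => S.ρ (-x)) (Set.Ioo 0 m) :=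
    hcρneg.comp continuous_neg.continuousOn hmapsTo
  have hbnd_ρn : ∀ x ∈ Set.Ioo (0:ℝ) m, 0 ≤ S.ρ (-x) ∧ S.ρ (-x) ≤ S.ub := fun x hx =>
    hbnd_neg _ (hmapsTo x hx)
  have hbndlb_pos : ∀ x ∈ Set.Ioo (0:ℝ) l, S.lb ≤ S.ρ x ∧ S.ρ x ≤ S.ub := fun x hx =>
    ⟨(S.bounds _ (hsub_pos hx)).1, (S.bounds _ (hsub_pos hx)).2⟩
  have hbndlb_ρn : ∀ x ∈ Set.Ioo (0:ℝ) m, S.lb ≤ S.ρ (-x) ∧ S.ρ (-x) ≤ S.ub := fun x hx =>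
    ⟨(S.bounds _ (hsub_neg (hmapsTo x hx))).1, (S.bounds _ (hsub_neg (hmapsTo x hx))).2⟩
  -- ========== E bound ==========
  have hGpos := EI_eq_pos (m := m) (g := g) (ω := ω) (s := s) hl hr0 S.ρ S.pd
  have hGneg := EI_eq_neg (l := l) (g := g) (ω := ω) (s := s) hm hr0 S.ρ S.pd
  have hint_fEpos : IntegrableOn (fun x => (-1:ℝ)*(g*r/l)*S.ρ x*(1-x/l)^(r-1)
      + (ω^2*s/l^2)*S.ρ x*(1-x/l)^(r-2)) (Set.Ioo 0 l) :=
    (intOn_crho' hl hcρpos habs_pos _ _ he1).add (intOn_crho' hl hcρpos habs_pos _ _ he2)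
  have hint_fEneg : IntegrableOn (fun x => (1:ℝ)*(g*r/m)*S.ρ x*(1+x/m)^(r-1)
      + (ω^2*s/m^2)*S.ρ x*(1+x/m)^(r-2)) (Set.Ioo (-m) 0) :=
    (intOn_crho_neg' hm hcρneg habs_neg _ _ he1).add (intOn_crho_neg' hm hcρneg habs_neg _ _ he2)
  have hintGpos : IntegrableOn (fun x => S.pd x * S.ρ x
      * (dψtest m l r x + r * (-(dψtest m l r x) / r)) ^ 2
      - 2*g*r*S.ρ x*ψtest m l r x*(-(dψtest m l r x)/r)
      + 4*ω^2*s*S.ρ x*(-(dψtest m l r x)/r)^2) (Set.Ioo 0 l) :=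
    hint_fEpos.congr_fun hGpos.symm measurableSet_Ioo
  have hintGneg : IntegrableOn (fun x => S.pd x * S.ρ x
      * (dψtest m l r x + r * (-(dψtest m l r x) / r)) ^ 2
      - 2*g*r*S.ρ x*ψtest m l r x*(-(dψtest m l r x)/r)
      + 4*ω^2*s*S.ρ x*(-(dψtest m l r x)/r)^2) (Set.Ioo (-m) 0) :=
    hint_fEneg.congr_fun hGneg.symm measurableSet_Ioo
  have hE1 : Een S ω r s (fun x => -(dψtest m l r x) / r) (ψtest m l r) (dψtest m l r)
      = (1/2) * ((∫ x in Set.Ioo (-m) 0, (S.pd x * S.ρ x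
          * (dψtest m l r x + r * (-(dψtest m l r x) / r)) ^ 2
          - 2*g*r*S.ρ x*ψtest m l r x*(-(dψtest m l r x)/r)
          + 4*ω^2*s*S.ρ x*(-(dψtest m l r x)/r)^2))
        + ∫ x in Set.Ioo 0 l, (S.pd x * S.ρ x
          * (dψtest m l r x + r * (-(dψtest m l r x) / r)) ^ 2
          - 2*g*r*S.ρ x*ψtest m l r x*(-(dψtest m l r x)/r)
          + 4*ω^2*s*S.ρ x*(-(dψtest m l r x)/r)^2)) := by
    rw [← split_int hm hl hintGneg hintGpos]
    rfl
  have hIpos_le : (∫ x in Set.Ioo 0 l, (S.pd x * S.ρ x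
        * (dψtest m l r x + r * (-(dψtest m l r x) / r)) ^ 2
        - 2*g*r*S.ρ x*ψtest m l r x*(-(dψtest m l r x)/r)
        + 4*ω^2*s*S.ρ x*(-(dψtest m l r x)/r)^2))
      ≤ (-1)*(g*S.ρplus) + g*L*l/(r+1) + ω^2*s*S.ub/(l*(r-1)) := by
    rw [setIntegral_congr_fun measurableSet_Ioo hGpos]
    refine side_E hl hg hr2 hs.le hcρpos hbnd_pos (fun x hx => ?_) hL0.le
    have := abs_le.1 (hlipP x hx)
    linarith [this.1, this.2]
  have hIneg_le : (∫ x in Set.Ioo (-m) 0, (S.pd x * S.ρ x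
        * (dψtest m l r x + r * (-(dψtest m l r x) / r)) ^ 2
        - 2*g*r*S.ρ x*ψtest m l r x*(-(dψtest m l r x)/r)
        + 4*ω^2*s*S.ρ x*(-(dψtest m l r x)/r)^2))
      ≤ 1*(g*S.ρminus) + g*L*m/(r+1) + ω^2*s*S.ub/(m*(r-1)) := by
    rw [setIntegral_congr_fun measurableSet_Ioo hGneg, reflect_int hm]
    have hcongr : Set.EqOn (fun x => (1:ℝ)*(g*r/m)*S.ρ (-x)*(1+(-x)/m)^(r-1)
        + (ω^2*s/m^2)*S.ρ (-x)*(1+(-x)/m)^(r-2))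
        (fun x => (1:ℝ)*(g*r/m)*S.ρ (-x)*(1-x/m)^(r-1)
        + (ω^2*s/m^2)*S.ρ (-x)*(1-x/m)^(r-2)) (Set.Ioo 0 m) := by
      intro x hx
      simp only [neg_div, sub_eq_add_neg]
    rw [setIntegral_congr_fun measurableSet_Ioo hcongr]
    refine side_E hm hg hr2 hs.le hcρn hbnd_ρn (fun x hx => ?_) hL0.le
    have := abs_le.1 (hlipM (-x) (hmapsTo x hx))
    have h2 := this.2
    simp only [neg_neg] at h2
    linarith
  have hEbound : Een S ω r s (fun x => -(dψtest m l r x) / r) (ψtest m l r) (dψtest m l r)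
      ≤ -(g*S.jump)/2 + A₁*(1+s)/(1+r) := by
    rw [hE1]
    have harith : (1/2)*((1*(g*S.ρminus) + g*L*m/(r+1) + ω^2*s*S.ub/(m*(r-1)))
        + ((-1)*(g*S.ρplus) + g*L*l/(r+1) + ω^2*s*S.ub/(l*(r-1))))
        = -(g*S.jump)/2 + (K1/(r+1) + K2*s/(r-1)) := by
      rw [hK1def, hK2def, SteadyState.jump]
      have h1 : r + 1 ≠ 0 := by linarith
      have h2 : r - 1 ≠ 0 := by linarith
      field_simp
      ring
    have harithE := arith_E hK1 hK2 hs hr2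
    have hsum := add_le_add hIneg_le hIpos_le
    have hstep : (1/2) * ((∫ x in Set.Ioo (-m) 0, (S.pd x * S.ρ x
          * (dψtest m l r x + r * (-(dψtest m l r x) / r)) ^ 2
          - 2*g*r*S.ρ x*ψtest m l r x*(-(dψtest m l r x)/r)
          + 4*ω^2*s*S.ρ x*(-(dψtest m l r x)/r)^2))
        + ∫ x in Set.Ioo 0 l, (S.pd x * S.ρ x
          * (dψtest m l r x + r * (-(dψtest m l r x) / r)) ^ 2
          - 2*g*r*S.ρ x*ψtest m l r x*(-(dψtest m l r x)/r)
          + 4*ω^2*s*S.ρ x*(-(dψtest m l r x)/r)^2))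
        ≤ (1/2)*((1*(g*S.ρminus) + g*L*m/(r+1) + ω^2*s*S.ub/(m*(r-1)))
        + ((-1)*(g*S.ρplus) + g*L*l/(r+1) + ω^2*s*S.ub/(l*(r-1)))) := by linarith
    rw [hA1def]
    linarith [hstep, harith.le, harithE]
  -- ========== J bounds ==========
  have hJposEq := JI_eq_pos (m := m) hl hr0 S.ρ
  have hJnegEq := JI_eq_neg (l := l) hm hr0 S.ρ
  have hint_fJpos : IntegrableOn (fun x => S.ρ x * ((1/(4*l^2))*(1-x/l)^(r-2) + (1-x/l)^r))
      (Set.Ioo 0 l) := by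
    have h : IntegrableOn (fun x => (1/(4*l^2)) * S.ρ x * (1-x/l)^(r-2)
        + 1 * S.ρ x * (1-x/l)^r) (Set.Ioo 0 l) :=
      (intOn_crho' hl hcρpos habs_pos (1/(4*l^2)) _ he2).add
        (intOn_crho' hl hcρpos habs_pos 1 _ he0)
    exact h.congr_fun (fun x _ => by ring) measurableSet_Ioo
  have hint_fJneg : IntegrableOn (fun x => S.ρ x * ((1/(4*m^2))*(1+x/m)^(r-2) + (1+x/m)^r))
      (Set.Ioo (-m) 0) := by
    have h : IntegrableOn (fun x => (1/(4*m^2)) * S.ρ x * (1+x/m)^(r-2)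
        + 1 * S.ρ x * (1+x/m)^r) (Set.Ioo (-m) 0) :=
      (intOn_crho_neg' hm hcρneg habs_neg (1/(4*m^2)) _ he2).add
        (intOn_crho_neg' hm hcρneg habs_neg 1 _ he0)
    exact h.congr_fun (fun x _ => by ring) measurableSet_Ioo
  have hintJIpos : IntegrableOn (fun x => S.ρ x
      * ((-(dψtest m l r x) / r) ^ 2 + (ψtest m l r x) ^ 2)) (Set.Ioo 0 l) :=
    hint_fJpos.congr_fun hJposEq.symm measurableSet_Ioo
  have hintJIneg : IntegrableOn (fun x => S.ρ x
      * ((-(dψtest m l r x) / r) ^ 2 + (ψtest m l r x) ^ 2)) (Set.Ioo (-m) 0) :=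
    hint_fJneg.congr_fun hJnegEq.symm measurableSet_Ioo
  have hJ1 : Jen S (fun x => -(dψtest m l r x) / r) (ψtest m l r)
      = (1/2) * ((∫ x in Set.Ioo (-m) 0, (S.ρ x
          * ((-(dψtest m l r x) / r) ^ 2 + (ψtest m l r x) ^ 2)))
        + ∫ x in Set.Ioo 0 l, (S.ρ x
          * ((-(dψtest m l r x) / r) ^ 2 + (ψtest m l r x) ^ 2))) := by
    rw [← split_int hm hl hintJIneg hintJIpos]
    rfl
  have hSJpos := side_J hl hr2 hcρpos hbndlb_pos S.lb_pos.le
  have hSJneg := side_J hm hr2 hcρn hbndlb_ρn S.lb_pos.le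
  have hJpos_lo : S.lb*(l/(r+1)) ≤ ∫ x in Set.Ioo 0 l, (S.ρ x
      * ((-(dψtest m l r x) / r) ^ 2 + (ψtest m l r x) ^ 2)) := by
    rw [setIntegral_congr_fun measurableSet_Ioo hJposEq]
    exact hSJpos.1
  have hJpos_hi : (∫ x in Set.Ioo 0 l, (S.ρ x
      * ((-(dψtest m l r x) / r) ^ 2 + (ψtest m l r x) ^ 2)))
      ≤ S.ub*((1/(4*l^2))*(l/(r-1)) + l/(r+1)) := by
    rw [setIntegral_congr_fun measurableSet_Ioo hJposEq]
    exact hSJpos.2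
  have hJneg_eq : (∫ x in Set.Ioo (-m) 0, (S.ρ x
      * ((-(dψtest m l r x) / r) ^ 2 + (ψtest m l r x) ^ 2)))
      = ∫ x in Set.Ioo 0 m, (S.ρ (-x) * ((1/(4*m^2))*(1-x/m)^(r-2) + (1-x/m)^r)) := by
    rw [setIntegral_congr_fun measurableSet_Ioo hJnegEq, reflect_int hm]
    exact setIntegral_congr_fun measurableSet_Ioo
      (fun x hx => by simp only [neg_div, sub_eq_add_neg])
  have hJneg_lo : S.lb*(m/(r+1)) ≤ ∫ x in Set.Ioo (-m) 0, (S.ρ x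
      * ((-(dψtest m l r x) / r) ^ 2 + (ψtest m l r x) ^ 2)) := by
    rw [hJneg_eq]
    exact hSJneg.1
  have hJneg_hi : (∫ x in Set.Ioo (-m) 0, (S.ρ x
      * ((-(dψtest m l r x) / r) ^ 2 + (ψtest m l r x) ^ 2)))
      ≤ S.ub*((1/(4*m^2))*(m/(r-1)) + m/(r+1)) := by
    rw [hJneg_eq]
    exact hSJneg.2
  have hJlo : A₂/(1+r) ≤ Jen S (fun x => -(dψtest m l r x) / r) (ψtest m l r) := by
    rw [hJ1]
    have heq : A₂/(1+r) = (1/2)*(S.lb*(m/(r+1)) + S.lb*(l/(r+1))) := by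
      rw [hA2def]
      field_simp
      ring
    linarith
  have hJhi : Jen S (fun x => -(dψtest m l r x) / r) (ψtest m l r) ≤ A₃/(1+r) := by
    rw [hJ1]
    have harj := arith_J hD1p.le hD2p.le hr2
    have heq : (1/2)*(S.ub*((1/(4*m^2))*(m/(r-1)) + m/(r+1))
        + S.ub*((1/(4*l^2))*(l/(r-1)) + l/(r+1))) = D1/(r-1) + D2/(r+1) := by
      rw [hD1def, hD2def]
      have h1 : r + 1 ≠ 0 := by linarith
      have h2 : r - 1 ≠ 0 := by linarith
      field_simp
      ring
    rw [hA3def]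
    linarith
  refine ⟨hEbound, hJlo, hJhi, ?_⟩
  -- ========== ratio bound ==========
  set E : ℝ := Een S ω r s (fun x => -(dψtest m l r x) / r) (ψtest m l r) (dψtest m l r)
    with hEdef
  set J : ℝ := Jen S (fun x => -(dψtest m l r x) / r) (ψtest m l r) with hJdef
  have hJpos : 0 < J := lt_of_lt_of_le (by positivity) hJlo
  set B : ℝ := -(g*S.jump)/2 + A₁*(1+s)/(1+r) with hBdef
  have hEJ : E/J ≤ B/J := by gcongr
  have hkey : E/J ≤ -(cJ*(1+r))/A₃ + A₁*(1+s)/A₂ := by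
    by_cases hB : B ≤ 0
    · have h2 : B/J ≤ B/(A₃/(1+r)) := by
        rw [div_eq_mul_inv, div_eq_mul_inv]
        exact mul_le_mul_of_nonpos_left (inv_anti₀ hJpos hJhi) hB
      have h3 : B/(A₃/(1+r)) = B*(1+r)/A₃ := div_div_eq_mul_div B A₃ (1+r)
      have h4 : B*(1+r)/A₃ = -(cJ*(1+r))/A₃ + A₁*(1+s)/A₃ := by
        rw [hBdef, hcJdef]
        have h1 : (1:ℝ)+r ≠ 0 := by linarith
        field_simp
      have h5 : A₁*(1+s)/A₃ ≤ A₁*(1+s)/A₂ := by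
        gcongr
      calc E/J ≤ B/J := hEJ
        _ ≤ B/(A₃/(1+r)) := h2
        _ = -(cJ*(1+r))/A₃ + A₁*(1+s)/A₃ := h3.trans h4
        _ ≤ -(cJ*(1+r))/A₃ + A₁*(1+s)/A₂ := by linarith
    · push_neg at hB
      have h2 : B/J ≤ B/(A₂/(1+r)) := by
        gcongr
      have h3 : B/(A₂/(1+r)) = B*(1+r)/A₂ := div_div_eq_mul_div B A₂ (1+r)
      have h4 : B*(1+r)/A₂ = -(cJ*(1+r))/A₂ + A₁*(1+s)/A₂ := by
        rw [hBdef, hcJdef]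
        have h1 : (1:ℝ)+r ≠ 0 := by linarith
        field_simp
      have h5 : cJ*(1+r)/A₃ ≤ cJ*(1+r)/A₂ := by
        gcongr
      have h6 : -(cJ*(1+r))/A₂ ≤ -(cJ*(1+r))/A₃ := by
        rw [neg_div, neg_div, neg_le_neg_iff]
        exact h5
      calc E/J ≤ B/J := hEJ
        _ ≤ B/(A₂/(1+r)) := h2
        _ = -(cJ*(1+r))/A₂ + A₁*(1+s)/A₂ := h3.trans h4
        _ ≤ -(cJ*(1+r))/A₃ + A₁*(1+s)/A₂ := by linarith
  have hfin : -(cJ*(1+r))/A₃ + A₁*(1+s)/A₂ ≤ A₁/A₂ - cJ/A₃*r + A₁/A₂*s := by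
    have heq : -(cJ*(1+r))/A₃ + A₁*(1+s)/A₂
        = (A₁/A₂ - cJ/A₃*r + A₁/A₂*s) - cJ/A₃ := by
      field_simp
      ring
    have hpos : 0 < cJ/A₃ := by positivity
    linarith
  linarith
end

section
/- For every (φ,ψ) ∈ L²(−m,l) × H₀¹(−m,l) and every s > 0, the energy admits the completion-of-square identity E(φ,ψ;s) = −(g⟦ρ₀⟧ψ(0)²)/2 + ½∫_{−m}^{l}(√(p'(ρ₀)ρ₀)(ψ' + |ξ|φ) − (g√ρ₀/√(p'(ρ₀)))ψ)² dx₃ + 2ω²s∫_{−m}^{l}ρ₀φ² dx₃. -/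
open MeasureTheory Real Set Filter
open scoped ENNReal

lemma PressureLaw.dp_bounds (P : PressureLaw) {lb ub : ℝ} (hlb : 0 < lb) :
    ∃ c C : ℝ, 0 < c ∧ ∀ z ∈ Set.Icc lb ub, c ≤ P.dp z ∧ P.dp z ≤ C := by
  have hKsub : Set.Icc lb ub ⊆ Set.Ioi 0 := fun z hz => lt_of_lt_of_le hlb hz.1
  obtain ⟨C0, hC0⟩ := P.inv_dp_locBdd _ isCompact_Icc hKsub
  have hdc : ContinuousOn P.dp (Set.Ioi 0) := by
    have h1 : ContinuousOn (deriv P.p) (Set.Ioi 0) :=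
      P.smooth.continuousOn_deriv_of_isOpen isOpen_Ioi (by simp)
    exact h1.congr fun z hz => ((P.hasDeriv z hz).deriv).symm
  obtain ⟨C, hC⟩ := isCompact_Icc.exists_bound_of_continuousOn (hdc.mono hKsub)
  set C1 : ℝ := max C0 1 with hC1def
  have hC1 : 0 < C1 := lt_of_lt_of_le one_pos (le_max_right _ _)
  refine ⟨1 / C1, C, by positivity, fun z hz => ⟨?_, ?_⟩⟩
  · have hdp := P.dp_pos z (hKsub hz)
    have h1 : 1 / P.dp z ≤ C1 := le_trans (hC0 z hz) (le_max_left _ _)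
    rw [div_le_iff₀ hdp] at h1
    rw [div_le_iff₀ hC1]
    nlinarith
  · exact le_trans (le_abs_self _) (hC z hz)

lemma key_algebra (d r w v φv g ξa ω s dρv : ℝ) (hd : 0 < d) (hr : 0 < r)
    (hode : d * dρv = -(g * r)) :
    d * r * (w + ξa * φv) ^ 2 - 2 * g * ξa * r * v * φv + 4 * ω ^ 2 * s * r * φv ^ 2
      = (Real.sqrt (d * r) * (w + ξa * φv) - g * Real.sqrt r / Real.sqrt d * v) ^ 2
        + (g * (dρv * v ^ 2 + r * (2 * (v * w))) + (4 * ω ^ 2 * s) * (r * φv ^ 2)) := by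
  have hmul : Real.sqrt (d * r) = Real.sqrt d * Real.sqrt r := Real.sqrt_mul hd.le r
  have hsd : Real.sqrt d ^ 2 = d := Real.sq_sqrt hd.le
  have hsr : Real.sqrt r ^ 2 = r := Real.sq_sqrt hr.le
  have hsdpos : 0 < Real.sqrt d := Real.sqrt_pos.mpr hd
  have hD0 : dρv = -(g * r) / d := by field_simp; linarith
  set a := Real.sqrt d
  set b := Real.sqrt r
  have hsq : (a * b * (w + ξa * φv) - g * b / a * v) ^ 2
      = a ^ 2 * b ^ 2 * (w + ξa * φv) ^ 2 - 2 * g * b ^ 2 * v * (w + ξa * φv)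
        + g ^ 2 * (b ^ 2 / a ^ 2) * v ^ 2 := by
    field_simp
    ring
  rw [hmul, hsq, hsd, hsr, hD0]
  field_simp
  ring

set_option maxHeartbeats 1600000 in
/-- **The completion-of-square identity for the energy** (proof of Lemma 2.1). -/
theorem energy_completion_of_square
    {m l g : ℝ} (hm : 0 < m) (hl : 0 < l) (hg : 0 < g) (ω : ℝ)
    {Pp Pm : PressureLaw} (S : SteadyState m l g Pp Pm)
    (ξ : ℝ × ℝ) (hξ : ξ ≠ 0)
    (φ ψ dψ : ℝ → ℝ) (hmem : MemAdm m l φ ψ dψ)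
    (s : ℝ) (hs : 0 < s) :
    Een S ω (mag ξ) s φ ψ dψ
      = -(g * S.jump * (ψ 0) ^ 2) / 2
        + (1 / 2) * (∫ x in Set.Ioo (-m) l,
            (Real.sqrt (S.pd x * S.ρ x) * (dψ x + mag ξ * φ x)
              - g * Real.sqrt (S.ρ x) / Real.sqrt (S.pd x) * ψ x) ^ 2)
        + 2 * ω ^ 2 * s * ∫ x in Set.Ioo (-m) l, S.ρ x * (φ x) ^ 2 := by
  set ξa := mag ξ with hξadef
  set μ := volume.restrict (Set.Ioo (-m) l) with hμdef
  have hm0 : -m < 0 := neg_lt_zero.mpr hm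
  have hml : -m < l := hm0.trans hl
  have hsub1 : Ioo (-m) 0 ⊆ Ioo (-m) l := Ioo_subset_Ioo le_rfl hl.le
  have hsub2 : Ioo 0 l ⊆ Ioo (-m) l := Ioo_subset_Ioo hm0.le le_rfl
  have hdisj : Disjoint (Ioo (-m) 0) (Ioo 0 l) := by
    rw [Set.disjoint_left]; rintro x ⟨_, h2⟩ ⟨h3, _⟩; linarith
  have hμeq : volume.restrict (Ioo (-m) l) = volume.restrict (Ioo (-m) 0 ∪ Ioo 0 l) := by
    have hU : Ioo (-m) 0 ∪ Ioo 0 l = Ioo (-m) l \ {0} := by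
      ext x
      simp only [mem_union, mem_Ioo, mem_diff, mem_singleton_iff]
      constructor
      · rintro (⟨h1, h2⟩ | ⟨h1, h2⟩)
        · exact ⟨⟨h1, h2.trans hl⟩, ne_of_lt h2⟩
        · exact ⟨⟨hm0.trans h1, h2⟩, ne_of_gt h1⟩
      · rintro ⟨⟨h1, h2⟩, h3⟩
        rcases lt_or_gt_of_ne h3 with h | h
        · exact Or.inl ⟨h1, h⟩
        · exact Or.inr ⟨h, h2⟩
    refine (Measure.restrict_congr_set ?_).symm
    rw [hU]
    exact diff_ae_eq_self.mpr (measure_mono_null inter_subset_right (measure_singleton 0))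
  -- measurability helper
  have haesm : ∀ f : ℝ → ℝ, ContinuousOn f (Ioo (-m) 0) → ContinuousOn f (Ioo 0 l) →
      AEStronglyMeasurable f μ := by
    intro f h1 h2
    rw [hμdef, hμeq, Measure.restrict_union hdisj measurableSet_Ioo]
    exact (h1.aestronglyMeasurable measurableSet_Ioo).add_measure
      (h2.aestronglyMeasurable measurableSet_Ioo)
  -- basic positivity
  have hρpos : ∀ x ∈ Ioo (-m) l, 0 < S.ρ x := fun x hx =>
    lt_of_lt_of_le S.lb_pos (S.bounds x hx).1
  have hρb : ∀ x ∈ Ioo (-m) l, |S.ρ x| ≤ S.ub := fun x hx => by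
    rw [abs_of_pos (hρpos x hx)]; exact (S.bounds x hx).2
  -- bounds on pd
  obtain ⟨cm, Cm, hcm, hbm⟩ := Pm.dp_bounds (ub := S.ub) S.lb_pos
  obtain ⟨cp, Cp, hcp, hbp⟩ := Pp.dp_bounds (ub := S.ub) S.lb_pos
  set c := min cm cp with hcdef
  set C := max Cm Cp with hCdef
  have hc : 0 < c := lt_min hcm hcp
  have hpdb : ∀ x ∈ Ioo (-m) l, c ≤ S.pd x ∧ S.pd x ≤ C := by
    intro x hx
    have hmemI : S.ρ x ∈ Icc S.lb S.ub := ⟨(S.bounds x hx).1, (S.bounds x hx).2⟩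
    unfold SteadyState.pd
    split
    · exact ⟨le_trans (min_le_left _ _) (hbm _ hmemI).1,
        le_trans (hbm _ hmemI).2 (le_max_left _ _)⟩
    · exact ⟨le_trans (min_le_right _ _) (hbp _ hmemI).1,
        le_trans (hbp _ hmemI).2 (le_max_right _ _)⟩
  have hpdpos : ∀ x ∈ Ioo (-m) l, 0 < S.pd x := fun x hx =>
    lt_of_lt_of_le hc (hpdb x hx).1
  -- continuity / measurability of ρ and pd
  have hρc1 : ContinuousOn S.ρ (Ioo (-m) 0) := S.smooth_neg.continuousOn
  have hρc2 : ContinuousOn S.ρ (Ioo 0 l) := S.smooth_pos.continuousOn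
  have hρm : AEStronglyMeasurable S.ρ μ := haesm _ hρc1 hρc2
  have hdpc : ∀ P : PressureLaw, ContinuousOn P.dp (Set.Ioi 0) := by
    intro P
    have h1 : ContinuousOn (deriv P.p) (Set.Ioi 0) :=
      P.smooth.continuousOn_deriv_of_isOpen isOpen_Ioi (by simp)
    exact h1.congr fun z hz => ((P.hasDeriv z hz).deriv).symm
  have hpdm : AEStronglyMeasurable S.pd μ := by
    refine haesm _ ?_ ?_
    · have h1 : ContinuousOn (fun x => Pm.dp (S.ρ x)) (Ioo (-m) 0) :=
        (hdpc Pm).comp hρc1 fun x hx => hρpos x (hsub1 hx)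
      exact h1.congr fun x hx => by simp [SteadyState.pd, hx.2]
    · have h1 : ContinuousOn (fun x => Pp.dp (S.ρ x)) (Ioo 0 l) :=
        (hdpc Pp).comp hρc2 fun x hx => hρpos x (hsub2 hx)
      exact h1.congr fun x hx => by simp [SteadyState.pd, not_lt.mpr hx.1.le]
  -- the ODE in terms of pd
  have hode_all : ∀ x ∈ Ioo (-m) l, x ≠ 0 → S.pd x * S.dρ x = -(g * S.ρ x) := by
    intro x hx hx0
    rcases lt_or_gt_of_ne hx0 with h | h
    · have := S.ode_neg x ⟨hx.1, h⟩
      simpa [SteadyState.pd, h] using this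
    · have := S.ode_pos x ⟨h, hx.2⟩
      simp only [SteadyState.pd, if_neg (not_lt.mpr h.le)]
      exact this
  have h0ae : ∀ᵐ x ∂μ, x ≠ (0 : ℝ) := by
    refine ae_restrict_of_ae ?_
    rw [ae_iff]
    simpa using measure_singleton (0 : ℝ)
  -- integrability helpers
  have hbdd : ∀ (f h : ℝ → ℝ) (Cb : ℝ), AEStronglyMeasurable f μ →
      (∀ x ∈ Ioo (-m) l, |f x| ≤ Cb) → Integrable h μ →
      Integrable (fun x => f x * h x) μ := by
    intro f h Cb hfm hfb hh
    refine hh.bdd_mul (c := Cb) hfm ?_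
    rw [hμdef]
    filter_upwards [ae_restrict_mem measurableSet_Ioo] with x hx
    simpa [Real.norm_eq_abs] using hfb x hx
  have hmul2 : ∀ f h : ℝ → ℝ, MemLp f 2 μ → MemLp h 2 μ →
      Integrable (fun x => f x * h x) μ := by
    intro f h hf hh
    have h12 : (1 : ℝ≥0∞) / 1 = 1 / 2 + 1 / 2 := by
      rw [ENNReal.div_add_div_same, one_add_one_eq_two,
        ENNReal.div_self two_ne_zero ENNReal.ofNat_ne_top, div_one]
    exact (memLp_one_iff_integrable.mp (MemLp.smul (r := 1) hh hf)).congr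
      (Eventually.of_forall fun x => rfl)
  -- L² memberships
  have hu : MemLp (fun x => dψ x + ξa * φ x) 2 μ :=
    hmem.dψ_mem.add (hmem.φ_mem.const_mul ξa)
  -- integrability of the pieces
  have hAint : Integrable (fun x => S.pd x * S.ρ x * (dψ x + ξa * φ x) ^ 2) μ := by
    refine hbdd (fun x => S.pd x * S.ρ x) _ (C * S.ub) (hpdm.mul hρm) ?_ hu.integrable_sq
    intro x hx
    have h1 := hpdb x hx
    have h2 := S.bounds x hx
    have h3 := hρpos x hx
    have h4 := hpdpos x hx
    rw [abs_of_nonneg (mul_nonneg h4.le h3.le)]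
    nlinarith
  have hBint : Integrable (fun x => 2 * g * ξa * S.ρ x * ψ x * φ x) μ := by
    have h1 := hbdd S.ρ _ S.ub hρm hρb (hmul2 ψ φ hmem.ψ_mem hmem.φ_mem)
    exact (h1.const_mul (2 * g * ξa)).congr (Eventually.of_forall fun x => by ring)
  have hCint : Integrable (fun x => S.ρ x * φ x ^ 2) μ :=
    hbdd S.ρ _ S.ub hρm hρb hmem.φ_mem.integrable_sq
  have hψsq : Integrable (fun x => ψ x ^ 2) μ := hmem.ψ_mem.integrable_sq
  -- dρ is a.e. equal to a bounded measurable function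
  have hdρae : ∀ᵐ x ∂μ, S.dρ x = -(g * S.ρ x) / S.pd x := by
    rw [hμdef]
    filter_upwards [ae_restrict_mem measurableSet_Ioo, hμdef ▸ h0ae] with x hx hx0
    rw [eq_div_iff (hpdpos x hx).ne']
    linear_combination hode_all x hx hx0
  have hDint : Integrable (fun x => S.dρ x * ψ x ^ 2 + S.ρ x * (2 * (ψ x * dψ x))) μ := by
    have hdρ'm : AEStronglyMeasurable (fun x => -(g * S.ρ x) / S.pd x) μ :=
      ((hρm.aemeasurable.const_mul g).neg.div hpdm.aemeasurable).aestronglyMeasurable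
    have hdρ'b : ∀ x ∈ Ioo (-m) l, |(-(g * S.ρ x)) / S.pd x| ≤ g * S.ub / c := by
      intro x hx
      rw [abs_div, abs_neg, abs_of_nonneg (mul_nonneg hg.le (hρpos x hx).le),
        abs_of_pos (hpdpos x hx)]
      exact div_le_div₀ (mul_nonneg hg.le (le_trans (hρpos x hx).le (S.bounds x hx).2))
        (mul_le_mul_of_nonneg_left (S.bounds x hx).2 hg.le) hc (hpdb x hx).1
    have h1 : Integrable (fun x => (-(g * S.ρ x) / S.pd x) * ψ x ^ 2) μ :=
      hbdd _ _ (g * S.ub / c) hdρ'm hdρ'b hψsq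
    have h1' : Integrable (fun x => S.dρ x * ψ x ^ 2) μ := by
      refine h1.congr ?_
      filter_upwards [hdρae] with x hx
      rw [hx]
    exact h1'.add (hbdd S.ρ _ S.ub hρm hρb
      ((hmul2 ψ dψ hmem.ψ_mem hmem.dψ_mem).const_mul 2))
  -- the pointwise completion-of-square identity, a.e.
  have hae : (fun x => S.pd x * S.ρ x * (dψ x + ξa * φ x) ^ 2
        - 2 * g * ξa * S.ρ x * ψ x * φ x + 4 * ω ^ 2 * s * S.ρ x * φ x ^ 2)
      =ᵐ[μ] fun x => (Real.sqrt (S.pd x * S.ρ x) * (dψ x + ξa * φ x)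
          - g * Real.sqrt (S.ρ x) / Real.sqrt (S.pd x) * ψ x) ^ 2
        + (g * (S.dρ x * ψ x ^ 2 + S.ρ x * (2 * (ψ x * dψ x)))
          + (4 * ω ^ 2 * s) * (S.ρ x * φ x ^ 2)) := by
    rw [hμdef]
    filter_upwards [ae_restrict_mem measurableSet_Ioo, hμdef ▸ h0ae] with x hx hx0
    have hd : 0 < S.pd x := hpdpos x hx
    have hr : 0 < S.ρ x := hρpos x hx
    have hode := hode_all x hx hx0
    exact key_algebra _ _ _ _ _ _ _ _ _ _ hd hr hode
  -- FTC on a subinterval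
  have hFTC : ∀ a b : ℝ, a < b → Ioo a b ⊆ Ioo (-m) l →
      (∀ x ∈ Ioo a b, HasDerivAt S.ρ (S.dρ x) x) →
      ∀ Fa Fb : ℝ, Tendsto (fun x => S.ρ x * ψ x ^ 2) (nhdsWithin a (Set.Ioi a)) (nhds Fa) →
      Tendsto (fun x => S.ρ x * ψ x ^ 2) (nhdsWithin b (Set.Iio b)) (nhds Fb) →
      ∫ x in Ioo a b, (S.dρ x * ψ x ^ 2 + S.ρ x * (2 * (ψ x * dψ x))) = Fb - Fa := by
    intro a b hab hsub hderiv Fa Fb hFa hFb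
    have hDon : IntegrableOn (fun x => S.dρ x * ψ x ^ 2 + S.ρ x * (2 * (ψ x * dψ x)))
        (Ioo (-m) l) volume := hDint
    have hint : IntervalIntegrable
        (fun x => S.dρ x * ψ x ^ 2 + S.ρ x * (2 * (ψ x * dψ x))) volume a b := by
      rw [intervalIntegrable_iff, uIoc_of_le hab.le,
        integrableOn_Ioc_iff_integrableOn_Ioo]
      exact hDon.mono_set hsub
    have hderiv' : ∀ x ∈ Ioo a b, HasDerivAt (fun y => S.ρ y * ψ y ^ 2)
        (S.dρ x * ψ x ^ 2 + S.ρ x * (2 * (ψ x * dψ x))) x := by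
      intro x hx
      have h1 : HasDerivAt (fun y => S.ρ y * ψ y ^ 2)
          (S.dρ x * ψ x ^ 2 + S.ρ x * (((2 : ℕ) : ℝ) * ψ x ^ (2 - 1) * dψ x)) x :=
        (hderiv x hx).mul ((hmem.ψ_deriv x (hsub hx)).pow 2)
      convert h1 using 1
      push_cast
      ring
    have heq := intervalIntegral.integral_eq_sub_of_hasDerivAt_of_tendsto hab hderiv'
      hint hFa hFb
    rwa [intervalIntegral.integral_of_le hab.le, integral_Ioc_eq_integral_Ioo] at heq
  -- boundary limits of ρ ψ²
  have hIccsub1 : Ioo (-m) 0 ⊆ Icc (-m) l := fun x hx => ⟨hx.1.le, (hx.2.trans hl).le⟩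
  have hIccsub2 : Ioo 0 l ⊆ Icc (-m) l := fun x hx => ⟨(hm0.trans hx.1).le, hx.2.le⟩
  have hψ_m : Tendsto ψ (nhdsWithin (-m) (Set.Ioi (-m))) (nhds 0) := by
    have h := (hmem.ψ_cont (-m) (left_mem_Icc.mpr hml.le)).mono hIccsub1
    rw [ContinuousWithinAt, nhdsWithin_Ioo_eq_nhdsGT hm0, hmem.bc_left] at h
    exact h
  have hψ_0m : Tendsto ψ (nhdsWithin 0 (Set.Iio 0)) (nhds (ψ 0)) := by
    have h := (hmem.ψ_cont 0 ⟨hm0.le, hl.le⟩).mono hIccsub1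
    rwa [ContinuousWithinAt, nhdsWithin_Ioo_eq_nhdsLT hm0] at h
  have hψ_0p : Tendsto ψ (nhdsWithin 0 (Set.Ioi 0)) (nhds (ψ 0)) := by
    have h := (hmem.ψ_cont 0 ⟨hm0.le, hl.le⟩).mono hIccsub2
    rwa [ContinuousWithinAt, nhdsWithin_Ioo_eq_nhdsGT hl] at h
  have hψ_l : Tendsto ψ (nhdsWithin l (Set.Iio l)) (nhds 0) := by
    have h := (hmem.ψ_cont l (right_mem_Icc.mpr hml.le)).mono hIccsub2
    rw [ContinuousWithinAt, nhdsWithin_Ioo_eq_nhdsLT hl, hmem.bc_right] at h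
    exact h
  have hF_m : Tendsto (fun x => S.ρ x * ψ x ^ 2) (nhdsWithin (-m) (Set.Ioi (-m)))
      (nhds 0) := by
    have hub : Tendsto (fun x => S.ub * ψ x ^ 2) (nhdsWithin (-m) (Set.Ioi (-m)))
        (nhds 0) := by
      simpa using (hψ_m.pow 2).const_mul S.ub
    refine tendsto_of_tendsto_of_tendsto_of_le_of_le' tendsto_const_nhds hub ?_ ?_
    · filter_upwards [Ioo_mem_nhdsGT_of_mem (left_mem_Ico.mpr hm0)] with x hx
      have h1 := hρpos x (hsub1 hx)
      positivity
    · filter_upwards [Ioo_mem_nhdsGT_of_mem (left_mem_Ico.mpr hm0)] with x hx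
      have h2 := (S.bounds x (hsub1 hx)).2
      nlinarith [sq_nonneg (ψ x)]
  have hF_l : Tendsto (fun x => S.ρ x * ψ x ^ 2) (nhdsWithin l (Set.Iio l)) (nhds 0) := by
    have hub : Tendsto (fun x => S.ub * ψ x ^ 2) (nhdsWithin l (Set.Iio l)) (nhds 0) := by
      simpa using (hψ_l.pow 2).const_mul S.ub
    refine tendsto_of_tendsto_of_tendsto_of_le_of_le' tendsto_const_nhds hub ?_ ?_
    · filter_upwards [Ioo_mem_nhdsLT_of_mem (right_mem_Ioc.mpr hl)] with x hx
      have h1 := hρpos x (hsub2 hx)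
      positivity
    · filter_upwards [Ioo_mem_nhdsLT_of_mem (right_mem_Ioc.mpr hl)] with x hx
      have h2 := (S.bounds x (hsub2 hx)).2
      nlinarith [sq_nonneg (ψ x)]
  have hF_0m : Tendsto (fun x => S.ρ x * ψ x ^ 2) (nhdsWithin 0 (Set.Iio 0))
      (nhds (S.ρminus * ψ 0 ^ 2)) := S.lim_minus.mul (hψ_0m.pow 2)
  have hF_0p : Tendsto (fun x => S.ρ x * ψ x ^ 2) (nhdsWithin 0 (Set.Ioi 0))
      (nhds (S.ρplus * ψ 0 ^ 2)) := S.lim_plus.mul (hψ_0p.pow 2)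
  -- the two FTC evaluations
  have hD1 : ∫ x in Ioo (-m) 0, (S.dρ x * ψ x ^ 2 + S.ρ x * (2 * (ψ x * dψ x)))
      = S.ρminus * ψ 0 ^ 2 - 0 :=
    hFTC (-m) 0 hm0 hsub1 S.deriv_neg _ _ hF_m hF_0m
  have hD2 : ∫ x in Ioo 0 l, (S.dρ x * ψ x ^ 2 + S.ρ x * (2 * (ψ x * dψ x)))
      = 0 - S.ρplus * ψ 0 ^ 2 :=
    hFTC 0 l hl hsub2 S.deriv_pos _ _ hF_0p hF_l
  have hDtotal : ∫ x, (S.dρ x * ψ x ^ 2 + S.ρ x * (2 * (ψ x * dψ x))) ∂μ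
      = (S.ρminus * ψ 0 ^ 2 - 0) + (0 - S.ρplus * ψ 0 ^ 2) := by
    have hDon : IntegrableOn (fun x => S.dρ x * ψ x ^ 2 + S.ρ x * (2 * (ψ x * dψ x)))
        (Ioo (-m) l) volume := hDint
    rw [hμdef, hμeq, ← hD1, ← hD2]
    exact setIntegral_union hdisj measurableSet_Ioo
      (MeasureTheory.IntegrableOn.mono_set hDon hsub1)
      (MeasureTheory.IntegrableOn.mono_set hDon hsub2)
  -- assemble
  have hAB : Integrable (fun x => S.pd x * S.ρ x * (dψ x + ξa * φ x) ^ 2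
      - 2 * g * ξa * S.ρ x * ψ x * φ x) μ := hAint.sub hBint
  have hC4 : Integrable (fun x => 4 * ω ^ 2 * s * S.ρ x * φ x ^ 2) μ :=
    (hCint.const_mul (4 * ω ^ 2 * s)).congr (Eventually.of_forall fun x => by ring)
  have hhint : Integrable (fun x => S.pd x * S.ρ x * (dψ x + ξa * φ x) ^ 2
      - 2 * g * ξa * S.ρ x * ψ x * φ x + 4 * ω ^ 2 * s * S.ρ x * φ x ^ 2) μ := hAB.add hC4
  have hGC : Integrable (fun x => g * (S.dρ x * ψ x ^ 2 + S.ρ x * (2 * (ψ x * dψ x)))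
      + (4 * ω ^ 2 * s) * (S.ρ x * φ x ^ 2)) μ :=
    (hDint.const_mul g).add (hCint.const_mul (4 * ω ^ 2 * s))
  have hsqint : Integrable (fun x => (Real.sqrt (S.pd x * S.ρ x) * (dψ x + ξa * φ x)
      - g * Real.sqrt (S.ρ x) / Real.sqrt (S.pd x) * ψ x) ^ 2) μ := by
    have h2 : Integrable (fun x => (S.pd x * S.ρ x * (dψ x + ξa * φ x) ^ 2
        - 2 * g * ξa * S.ρ x * ψ x * φ x + 4 * ω ^ 2 * s * S.ρ x * φ x ^ 2)
        - (g * (S.dρ x * ψ x ^ 2 + S.ρ x * (2 * (ψ x * dψ x)))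
          + (4 * ω ^ 2 * s) * (S.ρ x * φ x ^ 2))) μ := hhint.sub hGC
    refine h2.congr ?_
    filter_upwards [hae] with x hx
    linarith [hx]
  have hsplit : ∫ x, (S.pd x * S.ρ x * (dψ x + ξa * φ x) ^ 2
        - 2 * g * ξa * S.ρ x * ψ x * φ x + 4 * ω ^ 2 * s * S.ρ x * φ x ^ 2) ∂μ
      = (∫ x, ((Real.sqrt (S.pd x * S.ρ x) * (dψ x + ξa * φ x)
          - g * Real.sqrt (S.ρ x) / Real.sqrt (S.pd x) * ψ x) ^ 2) ∂μ)
        + (g * ((S.ρminus * ψ 0 ^ 2 - 0) + (0 - S.ρplus * ψ 0 ^ 2))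
          + (4 * ω ^ 2 * s) * ∫ x, (S.ρ x * φ x ^ 2) ∂μ) := by
    rw [integral_congr_ae hae,
      integral_add hsqint hGC,
      integral_add (hDint.const_mul g) (hCint.const_mul (4 * ω ^ 2 * s)),
      integral_const_mul, integral_const_mul, hDtotal]
  simp only [Een, SteadyState.jump]
  rw [hsplit]
  ring
end

section
/- Suppose (φ,ψ) ∈ 𝒜 satisfies E(φ,ψ;s) < 0 for some s > 0. Then ψ(0) ≠ 0. -/
open MeasureTheory Real Set Filter

/-- **Lemma 2.1**: if `(φ,ψ) ∈ 𝒜` and `E(φ,ψ;s) < 0` then `ψ(0) ≠ 0`. -/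
theorem negative_energy_nonzero_trace
    {m l g : ℝ} (hm : 0 < m) (hl : 0 < l) (hg : 0 < g) (ω : ℝ)
    {Pp Pm : PressureLaw} (S : SteadyState m l g Pp Pm)
    (ξ : ℝ × ℝ) (hξ : ξ ≠ 0)
    (φ ψ dψ : ℝ → ℝ) (hmem : MemAdm m l φ ψ dψ) (hJ : Jen S φ ψ = 1)
    (s : ℝ) (hs : 0 < s)
    (hE : Een S ω (mag ξ) s φ ψ dψ < 0) :
    ψ 0 ≠ 0 := by
  intro hpsi0
  -- basic facts
  have hml0 : (-m : ℝ) < 0 := by linarith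
  have h0l : (0 : ℝ) < l := hl
  have hml : (-m : ℝ) < l := by linarith
  have hmem0 : (0 : ℝ) ∈ Set.Ioo (-m) l := ⟨hml0, h0l⟩
  set a : ℝ := mag ξ with ha
  set νr : Measure ℝ := volume.restrict (Set.Ioo (-m) l) with hνr
  set F : ℝ → ℝ := fun x => S.pd x * S.ρ x * (dψ x + a * φ x) ^ 2
      - 2 * g * a * S.ρ x * ψ x * φ x + 4 * ω ^ 2 * s * S.ρ x * (φ x) ^ 2 with hF
  have hEF : (1 / 2 : ℝ) * ∫ x, F x ∂νr < 0 := hE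
  have hIneg : ∫ x, F x ∂νr < 0 := by linarith
  by_cases hInt : Integrable F νr
  swap
  · rw [integral_undef hInt] at hIneg; exact absurd hIneg (lt_irrefl 0)
  -- the two pieces
  set sl : Set ℝ := Set.Ioo (-m) 0 with hsl
  set tr : Set ℝ := Set.Ioo 0 l with htr
  have hsl_sub : sl ⊆ Set.Ioo (-m) l := Set.Ioo_subset_Ioo_right hl.le
  have htr_sub : tr ⊆ Set.Ioo (-m) l := Set.Ioo_subset_Ioo_left hml0.le
  have hdisj : Disjoint sl tr := by
    rw [Set.disjoint_left]
    rintro x ⟨_, hx2⟩ ⟨hx3, _⟩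
    exact absurd (hx2.trans hx3) (lt_irrefl x)
  have hmeas_sl : MeasurableSet sl := measurableSet_Ioo
  have hmeas_tr : MeasurableSet tr := measurableSet_Ioo
  have mem_sl : ∀ x : ℝ, -m < x → x < 0 → x ∈ sl := fun x h1 h2 => by
    rw [hsl]; exact ⟨h1, h2⟩
  have mem_tr : ∀ x : ℝ, 0 < x → x < l → x ∈ tr := fun x h1 h2 => by
    rw [htr]; exact ⟨h1, h2⟩
  have hsetae : Set.Ioo (-m) l =ᵐ[volume] ((sl ∪ tr : Set ℝ)) := by
    rw [MeasureTheory.ae_eq_set]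
    constructor
    · refine measure_mono_null (fun x hx => ?_) (measure_singleton (0:ℝ))
      rcases hx with ⟨hx1, hx2⟩
      rcases lt_trichotomy x 0 with h | h | h
      · exact absurd (Set.mem_union_left _ (mem_sl x hx1.1 h)) hx2
      · exact h
      · exact absurd (Set.mem_union_right _ (mem_tr x h hx1.2)) hx2
    · refine measure_mono_null (fun x hx => ?_) (measure_empty (μ := volume))
      rcases hx with ⟨hx1, hx2⟩
      rcases hx1 with h | h
      · exact absurd (hsl_sub h) hx2
      · exact absurd (htr_sub h) hx2
  have hcong : νr = volume.restrict (sl ∪ tr) :=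
    MeasureTheory.Measure.restrict_congr_set hsetae
  have hrestr_union : volume.restrict (sl ∪ tr)
      = volume.restrict sl + volume.restrict tr :=
    MeasureTheory.Measure.restrict_union hdisj hmeas_tr
  have hae_mem : ∀ᵐ x ∂νr, x ∈ sl ∪ tr := by
    rw [hcong]
    exact ae_restrict_mem (hmeas_sl.union hmeas_tr)
  -- positivity of ρ on nonzero points
  have hρ_bd : ∀ x ∈ Set.Ioo (-m) l, 0 < S.ρ x ∧ S.ρ x ≤ S.ub := fun x hx =>
    ⟨lt_of_lt_of_le S.lb_pos (S.bounds x hx).1, (S.bounds x hx).2⟩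
  have hub_pos : 0 < S.ub := lt_of_lt_of_le (hρ_bd 0 hmem0).1 (hρ_bd 0 hmem0).2
  have hlbub : S.lb ≤ S.ub := le_trans (S.bounds 0 hmem0).1 (S.bounds 0 hmem0).2
  -- bound on 1/dp
  have hKsub : Set.Icc S.lb S.ub ⊆ Set.Ioi (0 : ℝ) := fun z hz =>
    lt_of_lt_of_le S.lb_pos hz.1
  obtain ⟨Cm, hCm⟩ := Pm.inv_dp_locBdd (Set.Icc S.lb S.ub) isCompact_Icc hKsub
  obtain ⟨Cp, hCp⟩ := Pp.inv_dp_locBdd (Set.Icc S.lb S.ub) isCompact_Icc hKsub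
  set C : ℝ := max Cm Cp with hC
  have hC0 : 0 ≤ C := by
    have h1 : (0 : ℝ) < 1 / Pm.dp S.lb := by
      have := Pm.dp_pos S.lb (Set.mem_Ioi.mpr S.lb_pos)
      positivity
    have h2 := hCm S.lb ⟨le_refl _, hlbub⟩
    calc (0:ℝ) ≤ Cm := by linarith
    _ ≤ C := le_max_left _ _
  set B : ℝ := g * S.ub * C with hB
  -- one-sided facts at a non-interface point
  have hpd_ode : ∀ x ∈ sl ∪ tr, 0 < S.pd x ∧ S.pd x * S.dρ x = -(g * S.ρ x)
      ∧ 1 / S.pd x ≤ C := by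
    rintro x (hx | hx)
    · have hmem' : x ∈ Set.Ioo (-m) l := hsl_sub hx
      have hρpos : S.ρ x ∈ Set.Ioi (0:ℝ) := Set.mem_Ioi.mpr (hρ_bd x hmem').1
      have hxlt : x < 0 := hx.2
      have hpd : S.pd x = Pm.dp (S.ρ x) := by simp [SteadyState.pd, hxlt]
      refine ⟨hpd ▸ Pm.dp_pos _ hρpos, hpd ▸ S.ode_neg x hx, ?_⟩
      rw [hpd]
      exact le_trans (hCm _ ⟨(S.bounds x hmem').1, (S.bounds x hmem').2⟩)
        (le_max_left _ _)
    · have hmem' : x ∈ Set.Ioo (-m) l := htr_sub hx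
      have hρpos : S.ρ x ∈ Set.Ioi (0:ℝ) := Set.mem_Ioi.mpr (hρ_bd x hmem').1
      have hxgt : ¬ x < 0 := not_lt.mpr hx.1.le
      have hpd : S.pd x = Pp.dp (S.ρ x) := by simp [SteadyState.pd, hxgt]
      refine ⟨hpd ▸ Pp.dp_pos _ hρpos, hpd ▸ S.ode_pos x hx, ?_⟩
      rw [hpd]
      exact le_trans (hCp _ ⟨(S.bounds x hmem').1, (S.bounds x hmem').2⟩)
        (le_max_right _ _)
  have hdρ_eq : ∀ x ∈ sl ∪ tr, S.dρ x = -(g * S.ρ x) / S.pd x := by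
    intro x hx
    obtain ⟨hd, hode, -⟩ := hpd_ode x hx
    field_simp
    linarith [hode]
  have hdρ_bound : ∀ x ∈ sl ∪ tr, |S.dρ x| ≤ B := by
    intro x hx
    obtain ⟨hd, hode, hinv⟩ := hpd_ode x hx
    have hmem' : x ∈ Set.Ioo (-m) l := by
      rcases hx with h | h
      · exact hsl_sub h
      · exact htr_sub h
    have hρ1 := (hρ_bd x hmem').1
    have hρ2 := (hρ_bd x hmem').2
    rw [hdρ_eq x hx]
    rw [abs_div, abs_neg, abs_of_pos hd, abs_of_pos (by positivity : (0:ℝ) < g * S.ρ x)]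
    rw [div_le_iff₀ hd]
    have hinv' : 1 ≤ C * S.pd x := by
      rw [div_le_iff₀ hd] at hinv
      linarith
    have hBd : B * S.pd x = g * S.ub * (C * S.pd x) := by ring
    rw [hBd]
    have h1 : g * S.ρ x ≤ g * S.ub := by nlinarith
    nlinarith [mul_le_mul_of_nonneg_left hinv' (show (0:ℝ) ≤ g * S.ub by positivity)]
  -- measurability of ρ and dρ
  have hρ_cont_sl : ContinuousOn S.ρ sl := fun x hx =>
    (S.deriv_neg x hx).continuousAt.continuousWithinAt
  have hρ_cont_tr : ContinuousOn S.ρ tr := fun x hx =>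
    (S.deriv_pos x hx).continuousAt.continuousWithinAt
  have hρ_aesm : AEStronglyMeasurable S.ρ νr := by
    rw [hcong, hrestr_union]
    exact aestronglyMeasurable_add_measure_iff.mpr
      ⟨hρ_cont_sl.aestronglyMeasurable hmeas_sl,
       hρ_cont_tr.aestronglyMeasurable hmeas_tr⟩
  have hdρ_aesm : AEStronglyMeasurable S.dρ νr := by
    refine ((measurable_deriv S.ρ).aestronglyMeasurable).congr ?_
    filter_upwards [hae_mem] with x hx
    rcases hx with h | h
    · exact (S.deriv_neg x h).deriv
    · exact (S.deriv_pos x h).deriv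
  -- integrability facts
  have hψsq : Integrable (fun x => ψ x ^ 2) νr := hmem.ψ_mem.integrable_sq
  have hdψsq : Integrable (fun x => dψ x ^ 2) νr := hmem.dψ_mem.integrable_sq
  have hψdψ : Integrable (fun x => ψ x * dψ x) νr := by
    refine Integrable.mono' (hψsq.add hdψsq) (hmem.ψ_mem.1.mul hmem.dψ_mem.1) ?_
    filter_upwards with x
    rw [Real.norm_eq_abs, abs_mul]
    simp only [Pi.add_apply]
    nlinarith [sq_nonneg (|ψ x| - |dψ x|), sq_abs (ψ x), sq_abs (dψ x),
      abs_nonneg (ψ x), abs_nonneg (dψ x)]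
  have hρ_ub_ae : ∀ᵐ x ∂νr, ‖S.ρ x‖ ≤ S.ub := by
    filter_upwards [ae_restrict_mem (measurableSet_Ioo (a := -m) (b := l))] with x hx
    rw [Real.norm_eq_abs, abs_of_pos (hρ_bd x hx).1]
    exact (hρ_bd x hx).2
  have hdρ_ub_ae : ∀ᵐ x ∂νr, ‖S.dρ x‖ ≤ B := by
    filter_upwards [hae_mem] with x hx
    rw [Real.norm_eq_abs]
    exact hdρ_bound x hx
  set G' : ℝ → ℝ := fun x => g * (S.dρ x * ψ x ^ 2 + S.ρ x * (2 * (ψ x * dψ x)))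
    with hG'
  have hG'int : Integrable G' νr := by
    refine Integrable.const_mul (Integrable.add ?_ ?_) g
    · exact Integrable.bdd_mul hψsq hdρ_aesm hdρ_ub_ae
    · exact Integrable.bdd_mul (hψdψ.const_mul 2) hρ_aesm hρ_ub_ae
  -- boundary limits of G
  set G : ℝ → ℝ := fun x => g * (S.ρ x * ψ x ^ 2) with hGdef
  have key_tendsto : ∀ (Fl : Filter ℝ), Tendsto ψ Fl (nhds 0) →
      (∀ᶠ x in Fl, |S.ρ x| ≤ S.ub) → Tendsto G Fl (nhds 0) := by
    intro Fl hψt hbd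
    have hlim : Tendsto (fun x => |g| * S.ub * (ψ x * ψ x)) Fl (nhds 0) := by
      have := (hψt.mul hψt).const_mul (|g| * S.ub)
      simpa using this
    refine squeeze_zero_norm' ?_ hlim
    filter_upwards [hbd] with x hx
    rw [Real.norm_eq_abs]
    have h1 : |G x| = |g| * (|S.ρ x| * ψ x ^ 2) := by
      rw [hGdef]
      simp only []
      rw [abs_mul, abs_mul, abs_of_nonneg (sq_nonneg (ψ x))]
    rw [h1]
    beta_reduce
    have hg0 : (0:ℝ) ≤ |g| := abs_nonneg g
    have hρ0 : (0:ℝ) ≤ |S.ρ x| := abs_nonneg _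
    rw [pow_two]
    nlinarith [mul_le_mul_of_nonneg_right hx (mul_self_nonneg (ψ x))]
  have hψ_cont0 : ContinuousAt ψ 0 := (hmem.ψ_deriv 0 hmem0).continuousAt
  have hψt0 : Tendsto ψ (nhds 0) (nhds 0) := by
    have := hψ_cont0.tendsto
    rwa [hpsi0] at this
  have hbd_sl_right : ∀ᶠ x in nhdsWithin (0:ℝ) (Set.Iio 0), |S.ρ x| ≤ S.ub := by
    filter_upwards [Ioo_mem_nhdsLT_of_mem (Set.mem_Ioc.mpr ⟨hml0, le_refl (0:ℝ)⟩)]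
      with x hx
    rw [abs_of_pos (hρ_bd x (hsl_sub hx)).1]
    exact (hρ_bd x (hsl_sub hx)).2
  have hbd_tr_left : ∀ᶠ x in nhdsWithin (0:ℝ) (Set.Ioi 0), |S.ρ x| ≤ S.ub := by
    filter_upwards [Ioo_mem_nhdsGT_of_mem (Set.mem_Ico.mpr ⟨le_refl (0:ℝ), h0l⟩)]
      with x hx
    rw [abs_of_pos (hρ_bd x (htr_sub hx)).1]
    exact (hρ_bd x (htr_sub hx)).2
  have hbd_left : ∀ᶠ x in nhdsWithin (-m) (Set.Ioi (-m)), |S.ρ x| ≤ S.ub := by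
    filter_upwards [Ioo_mem_nhdsGT_of_mem (Set.mem_Ico.mpr ⟨le_refl (-m), hml0⟩)]
      with x hx
    rw [abs_of_pos (hρ_bd x (hsl_sub hx)).1]
    exact (hρ_bd x (hsl_sub hx)).2
  have hbd_right : ∀ᶠ x in nhdsWithin l (Set.Iio l), |S.ρ x| ≤ S.ub := by
    filter_upwards [Ioo_mem_nhdsLT_of_mem (Set.mem_Ioc.mpr ⟨h0l, le_refl l⟩)]
      with x hx
    rw [abs_of_pos (hρ_bd x (htr_sub hx)).1]
    exact (hρ_bd x (htr_sub hx)).2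
  have hψ_left : Tendsto ψ (nhdsWithin (-m) (Set.Ioi (-m))) (nhds 0) := by
    have hc : Tendsto ψ (nhdsWithin (-m) (Set.Icc (-m) l)) (nhds (ψ (-m))) :=
      hmem.ψ_cont (-m) (Set.mem_Icc.mpr ⟨le_refl _, hml.le⟩)
    rw [hmem.bc_left] at hc
    refine hc.mono_left ?_
    rw [← nhdsWithin_Ioc_eq_nhdsGT hml]
    exact nhdsWithin_mono _ Set.Ioc_subset_Icc_self
  have hψ_right : Tendsto ψ (nhdsWithin l (Set.Iio l)) (nhds 0) := by
    have hc : Tendsto ψ (nhdsWithin l (Set.Icc (-m) l)) (nhds (ψ l)) :=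
      hmem.ψ_cont l (Set.mem_Icc.mpr ⟨hml.le, le_refl _⟩)
    rw [hmem.bc_right] at hc
    refine hc.mono_left ?_
    rw [← nhdsWithin_Ico_eq_nhdsLT hml]
    exact nhdsWithin_mono _ Set.Ico_subset_Icc_self
  have hG_left : Tendsto G (nhdsWithin (-m) (Set.Ioi (-m))) (nhds 0) :=
    key_tendsto _ hψ_left hbd_left
  have hG_0m : Tendsto G (nhdsWithin (0:ℝ) (Set.Iio 0)) (nhds 0) :=
    key_tendsto _ (hψt0.mono_left nhdsWithin_le_nhds) hbd_sl_right
  have hG_0p : Tendsto G (nhdsWithin (0:ℝ) (Set.Ioi 0)) (nhds 0) :=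
    key_tendsto _ (hψt0.mono_left nhdsWithin_le_nhds) hbd_tr_left
  have hG_right : Tendsto G (nhdsWithin l (Set.Iio l)) (nhds 0) :=
    key_tendsto _ hψ_right hbd_right
  -- derivative of G
  have hG_deriv : ∀ x ∈ sl ∪ tr, HasDerivAt G (G' x) x := by
    intro x hx
    have hψd : HasDerivAt ψ (dψ x) x := by
      rcases hx with h | h
      · exact hmem.ψ_deriv x (hsl_sub h)
      · exact hmem.ψ_deriv x (htr_sub h)
    have hρd : HasDerivAt S.ρ (S.dρ x) x := by
      rcases hx with h | h
      · exact S.deriv_neg x h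
      · exact S.deriv_pos x h
    have h1 : HasDerivAt (fun y => ψ y ^ 2) (2 * ψ x ^ 1 * dψ x) x := hψd.pow 2
    have h2 := (hρd.mul h1).const_mul g
    rw [show G' x = g * (S.dρ x * ψ x ^ 2 + S.ρ x * (2 * ψ x ^ 1 * dψ x)) by
      simp only [hG']; ring]
    exact h2
  -- IntegrableOn G' on the pieces
  have hG'on : IntegrableOn G' (sl ∪ tr) volume := by
    have := hG'int
    rw [hcong] at this
    exact this
  have hG'sl : IntegrableOn G' sl volume := hG'on.mono_set Set.subset_union_left
  have hG'tr : IntegrableOn G' tr volume := hG'on.mono_set Set.subset_union_right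
  -- FTC on each piece
  have hint_sl : ∫ x in sl, G' x = 0 := by
    have hII : IntervalIntegrable G' volume (-m) 0 := by
      rw [intervalIntegrable_iff, Set.uIoc_of_le hml0.le]
      rw [integrableOn_Ioc_iff_integrableOn_Ioo]
      exact hG'sl
    have h := intervalIntegral.integral_eq_sub_of_hasDerivAt_of_tendsto hml0
      (fun x hx => hG_deriv x (Set.mem_union_left _ hx)) hII hG_left hG_0m
    rw [intervalIntegral.integral_of_le hml0.le, integral_Ioc_eq_integral_Ioo] at h
    rw [hsl, h, sub_zero]
  have hint_tr : ∫ x in tr, G' x = 0 := by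
    have hII : IntervalIntegrable G' volume 0 l := by
      rw [intervalIntegrable_iff, Set.uIoc_of_le h0l.le]
      rw [integrableOn_Ioc_iff_integrableOn_Ioo]
      exact hG'tr
    have h := intervalIntegral.integral_eq_sub_of_hasDerivAt_of_tendsto h0l
      (fun x hx => hG_deriv x (Set.mem_union_right _ hx)) hII hG_0p hG_right
    rw [intervalIntegral.integral_of_le h0l.le, integral_Ioc_eq_integral_Ioo] at h
    rw [htr, h, sub_zero]
  have hG'zero : ∫ x, G' x ∂νr = 0 := by
    rw [hcong, MeasureTheory.setIntegral_union hdisj hmeas_tr hG'sl hG'tr,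
      hint_sl, hint_tr]
    ring
  -- pointwise nonnegativity of F - G'
  have hpt : ∀ᵐ x ∂νr, 0 ≤ F x - G' x := by
    filter_upwards [hae_mem] with x hx
    obtain ⟨hd, hode, -⟩ := hpd_ode x hx
    have hmem' : x ∈ Set.Ioo (-m) l := by
      rcases hx with h | h
      · exact hsl_sub h
      · exact htr_sub h
    have hr : 0 < S.ρ x := (hρ_bd x hmem').1
    have hdρx : S.dρ x = -(g * S.ρ x) / S.pd x := hdρ_eq x hx
    have hiden : F x - G' x
        = S.ρ x / S.pd x * (S.pd x * (dψ x + a * φ x) - g * ψ x) ^ 2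
          + 4 * ω ^ 2 * s * S.ρ x * (φ x) ^ 2 := by
      simp only [hF, hG']
      beta_reduce
      rw [hdρx]
      field_simp
      ring
    rw [hiden]
    have h1 : 0 ≤ S.ρ x / S.pd x * (S.pd x * (dψ x + a * φ x) - g * ψ x) ^ 2 :=
      mul_nonneg (div_nonneg hr.le hd.le) (sq_nonneg _)
    have h2 : 0 ≤ 4 * ω ^ 2 * s * S.ρ x * (φ x) ^ 2 :=
      mul_nonneg (mul_nonneg (mul_nonneg (by positivity) hs.le) hr.le) (sq_nonneg _)
    linarith
  have hnn : 0 ≤ ∫ x, (F x - G' x) ∂νr := integral_nonneg_of_ae hpt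
  rw [integral_sub hInt hG'int, hG'zero, sub_zero] at hnn
  linarith
end
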